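/- arXiv:1705.09281 — 8 statements merged into one kernel-verified Lean document; each statement's English description precedes it below -/
import Mathlib

section
/- For every real number C ≥ 1 there exists a real constant C' ≥ 1 (depending only on C) such that for all integers k ≥ 1 and N ≥ 1: ∑_{m=1}^{N} C^m (m!)² / k^m ≤ C' · ( k + C'^N (N!)² / k^N ). -/
/-!
Write `t m = C^m (m!)² / k^m = ∏_{j<m} C (j+1)² / k`. The factors increase with `j`, so `t m ≤ 1`
as long as `C m² ≤ k`, and from the first `m` with `k ≤ C (m+1)²` on the sequence `t` is
nondecreasing. Terms of the first kind satisfy `m ≤ C m² ≤ k`, so there are at most `k` of them;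
each of the at most `N ≤ 2^N` other terms is at most `t N`. Hence the sum is at most
`k + 2^N t N ≤ 2C (k + (2C)^N (N!)² / k^N)`.
-/

open Finset Nat

noncomputable section

def factorialSqTerm (C k : ℝ) (m : ℕ) : ℝ := C ^ m * (m ! : ℝ) ^ 2 / k ^ m

namespace factorialSqTerm

variable {C k : ℝ}

theorem eq_prod_range (C k : ℝ) (m : ℕ) :
    factorialSqTerm C k m = ∏ j ∈ range m, C * ((j : ℝ) + 1) ^ 2 / k := by
  induction m with
  | zero => simp [factorialSqTerm]
  | succ m ih =>
    rw [prod_range_succ, ← ih]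
    simp only [factorialSqTerm, factorial_succ, cast_mul, cast_succ, pow_succ, div_eq_mul_inv,
      mul_inv]
    ring

theorem nonneg (hC : 0 ≤ C) (hk : 0 ≤ k) (m : ℕ) : 0 ≤ factorialSqTerm C k m := by
  unfold factorialSqTerm
  positivity

theorem le_one (hC : 0 ≤ C) (hk : 0 < k) {m : ℕ} (h : C * (m : ℝ) ^ 2 ≤ k) :
    factorialSqTerm C k m ≤ 1 := by
  rw [eq_prod_range]
  refine prod_le_one (fun j _ => by positivity) fun j hj => ?_
  have hjm : (j : ℝ) + 1 ≤ m := by exact_mod_cast mem_range.mp hj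
  rw [div_le_one hk]
  exact le_trans (by gcongr) h

theorem le_of_le (hC : 0 ≤ C) (hk : 0 < k) {m n : ℕ} (hmn : m ≤ n)
    (h : k ≤ C * ((m : ℝ) + 1) ^ 2) : factorialSqTerm C k m ≤ factorialSqTerm C k n := by
  rw [eq_prod_range, eq_prod_range, ← prod_range_mul_prod_Ico _ hmn]
  refine le_mul_of_one_le_right (prod_nonneg fun j _ => by positivity) ?_
  refine Finset.one_le_prod fun j hj => ?_
  have hmj : (m : ℝ) ≤ j := by exact_mod_cast (mem_Ico.mp hj).1
  rw [one_le_div hk]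
  exact h.trans (by gcongr)

theorem sum_Icc_le (hC : 1 ≤ C) {k : ℕ} (hk : 0 < k) (N : ℕ) :
    ∑ m ∈ Icc 1 N, factorialSqTerm C k m ≤ k + N * factorialSqTerm C k N := by
  have hk' : (0 : ℝ) < k := by exact_mod_cast hk
  have hterm : ∀ m ∈ Icc 1 N,
      factorialSqTerm C k m ≤ (if m ≤ k then 1 else 0) + factorialSqTerm C k N := by
    intro m hm
    have hmN := (mem_Icc.mp hm).2
    have htN := nonneg (zero_le_one.trans hC) hk'.le N
    by_cases hsmall : C * (m : ℝ) ^ 2 ≤ k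
    · have hmk : m ≤ k := by
        have hm2 : (m : ℝ) ≤ (m : ℝ) ^ 2 := by exact_mod_cast Nat.le_self_pow two_ne_zero m
        exact_mod_cast hm2.trans ((le_mul_of_one_le_left (by positivity) hC).trans hsmall)
      rw [if_pos hmk]
      linarith [le_one (zero_le_one.trans hC) hk' hsmall]
    · have hlarge : (k : ℝ) ≤ C * ((m : ℝ) + 1) ^ 2 :=
        (not_le.mp hsmall).le.trans (by gcongr; linarith)
      have hle := le_of_le (zero_le_one.trans hC) hk' hmN hlarge
      split_ifs <;> linarith
  have hcount : ((Icc 1 N).filter (· ≤ k)).card ≤ k :=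
    (card_le_card fun m hm => by
      simp only [mem_filter, mem_Icc] at hm ⊢
      exact ⟨hm.1.1, hm.2⟩).trans (Nat.card_Icc 1 k).le
  calc ∑ m ∈ Icc 1 N, factorialSqTerm C k m
      ≤ ∑ m ∈ Icc 1 N, ((if m ≤ k then 1 else 0) + factorialSqTerm C k N) := sum_le_sum hterm
    _ ≤ k + N * factorialSqTerm C k N := by
      rw [sum_add_distrib, sum_boole, sum_const, Nat.card_Icc, nsmul_eq_mul]
      simp only [Nat.add_sub_cancel]
      exact add_le_add_left (by exact_mod_cast hcount) _

end factorialSqTerm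

end

/-- For every real `C ≥ 1` there is `C' ≥ 1` such that for all integers `k, N ≥ 1`,
`∑_{m=1}^N C^m (m!)² / k^m ≤ C' (k + C'^N (N!)² / k^N)`. -/
theorem stmt_2 (C : ℝ) (hC : 1 ≤ C) :
    ∃ C' : ℝ, 1 ≤ C' ∧ ∀ k N : ℕ, 1 ≤ k → 1 ≤ N →
      ∑ m ∈ Finset.Icc 1 N, C ^ m * (m.factorial : ℝ) ^ 2 / (k : ℝ) ^ m ≤
        C' * ((k : ℝ) + C' ^ N * (N.factorial : ℝ) ^ 2 / (k : ℝ) ^ N) := by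
  refine ⟨2 * C, by linarith, fun k N hk _ => ?_⟩
  have htN := factorialSqTerm.nonneg (zero_le_one.trans hC) (Nat.cast_nonneg k) N
  have hN : (N : ℝ) ≤ 2 ^ N := by exact_mod_cast N.lt_two_pow_self.le
  have hlast : (2 * C) ^ N * (N ! : ℝ) ^ 2 / (k : ℝ) ^ N = 2 ^ N * factorialSqTerm C k N := by
    rw [factorialSqTerm, mul_pow]
    ring
  calc ∑ m ∈ Icc 1 N, C ^ m * (m ! : ℝ) ^ 2 / (k : ℝ) ^ m
      ≤ k + N * factorialSqTerm C k N := factorialSqTerm.sum_Icc_le hC hk N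
    _ ≤ 1 * (k + 2 ^ N * factorialSqTerm C k N) := by rw [one_mul]; gcongr
    _ ≤ 2 * C * (k + (2 * C) ^ N * (N ! : ℝ) ^ 2 / (k : ℝ) ^ N) := by
      rw [hlast]
      gcongr
      linarith
end

section
/- For every real number C ≥ 1 there exists a real constant C'' ≥ 1 (depending only on C) such that for every integer k ≥ C, writing N₀ = ⌊(k/C)^{1/2}⌋, and for every integer N with 1 ≤ N ≤ N₀ − 1: ∑_{j=N}^{N₀−1} C^j (j!)² / k^j ≤ C''^N (N!)² / k^N. -/
/-!
With `u = C / k`, the terms are `a_j = u ^ j (j!)²`, and `N₀ ≤ √(k / C)` means `u N₀² ≤ 1`.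
Pairing the factors of `(N + m)! / N!` symmetrically (two-term AM-GM) gives
`(N + m)! ≤ N! ((2N + m + 1) / 2) ^ m`, so for `N + m < N₀` the ratio `a_{N+m} / a_N` is at most
`q ^ m` with `q = (N + N₀) / (2 N₀) < 1`. Summing the geometric series bounds the sum by
`2 N₀ / (N₀ - N) ≤ 2 (N + 1) ≤ 4 ^ N` times `a_N`.
-/

open Finset Nat

theorem sq_prod_range_add_le {x : ℝ} (hx : 0 ≤ x) (m : ℕ) :
    (∏ i ∈ range m, (x + i)) ^ 2 ≤ (x + ((m : ℝ) - 1) / 2) ^ (2 * m) := by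
  have reflect : ∏ i ∈ range m, (x + i) = ∏ i ∈ range m, (x + (m - 1 - i : ℕ)) :=
    (prod_range_reflect (fun i => x + i) m).symm
  calc (∏ i ∈ range m, (x + i)) ^ 2
      = ∏ i ∈ range m, (x + i) * (x + (m - 1 - i : ℕ)) := by
        rw [sq, prod_mul_distrib, ← reflect]
    _ ≤ ∏ _i ∈ range m, (x + ((m : ℝ) - 1) / 2) ^ 2 := by
        refine prod_le_prod (fun i _ => by positivity) fun i hi => ?_
        have hmi : ((m - 1 - i : ℕ) : ℝ) = m - 1 - i := by
          rw [Finset.mem_range] at hi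
          rw [Nat.cast_sub (by omega), Nat.cast_sub (by omega)]
          simp
        rw [hmi]
        nlinarith [sq_nonneg ((i : ℝ) - (m - 1 - i))]
    _ = (x + ((m : ℝ) - 1) / 2) ^ (2 * m) := by rw [prod_const, card_range, ← pow_mul]

theorem factorial_add_sq_le (N m : ℕ) :
    ((N + m)! : ℝ) ^ 2 ≤ (N ! : ℝ) ^ 2 * ((2 * N + m + 1) / 2) ^ (2 * m) := by
  have hprod : ((N + m)! : ℝ) = N ! * ∏ i ∈ range m, ((N + 1 : ℝ) + i) := by
    rw [← factorial_mul_ascFactorial, ascFactorial_eq_prod_range]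
    push_cast
    rfl
  have hmid : (N + 1 : ℝ) + ((m : ℝ) - 1) / 2 = (2 * N + m + 1) / 2 := by ring
  rw [hprod, mul_pow, ← hmid]
  gcongr
  exact sq_prod_range_add_le (by positivity) m

theorem pow_mul_factorial_add_sq_le {u : ℝ} (hu : 0 ≤ u) {N m n : ℕ} (hmn : N + m < n)
    (hun : u * n ^ 2 ≤ 1) :
    u ^ (N + m) * ((N + m)! : ℝ) ^ 2 ≤ u ^ N * (N ! : ℝ) ^ 2 * ((N + n) / (2 * n)) ^ m := by
  have hn : (0 : ℝ) < n := by exact_mod_cast (show 0 < n by omega)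
  have hmn' : (N : ℝ) + m + 1 ≤ n := by exact_mod_cast hmn
  have ratio : u * ((2 * N + m + 1) / 2) ^ 2 ≤ (N + n) / (2 * n) := by
    rw [le_div_iff₀ (by positivity)]
    have hN : (0 : ℝ) ≤ N := N.cast_nonneg
    nlinarith [mul_le_mul_of_nonneg_left (show (2 * N + m + 1 : ℝ) ≤ 2 * n by linarith) hu]
  calc u ^ (N + m) * ((N + m)! : ℝ) ^ 2
      ≤ u ^ (N + m) * ((N ! : ℝ) ^ 2 * ((2 * N + m + 1) / 2) ^ (2 * m)) := by
        gcongr; exact factorial_add_sq_le N m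
    _ = u ^ N * (N ! : ℝ) ^ 2 * (u * ((2 * N + m + 1) / 2) ^ 2) ^ m := by
        rw [pow_add, pow_mul, mul_pow]; ring
    _ ≤ u ^ N * (N ! : ℝ) ^ 2 * ((N + n) / (2 * n)) ^ m := by gcongr

theorem sum_Ico_pow_mul_factorial_sq_le {u : ℝ} (hu : 0 ≤ u) {N n : ℕ} (hNn : N < n)
    (hun : u * n ^ 2 ≤ 1) :
    ∑ j ∈ Ico N n, u ^ j * (j ! : ℝ) ^ 2 ≤ 2 * (N + 1) * (u ^ N * (N ! : ℝ) ^ 2) := by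
  set q : ℝ := (N + n) / (2 * n)
  have hn : (0 : ℝ) < n := by exact_mod_cast (show 0 < n by omega)
  have hNn' : (N : ℝ) + 1 ≤ n := by exact_mod_cast hNn
  have hq1 : q < 1 := by rw [div_lt_one (by positivity)]; linarith
  have geom : ∑ m ∈ range (n - N), q ^ m ≤ 2 * (N + 1) := by
    calc ∑ m ∈ range (n - N), q ^ m ≤ q ^ 0 / (1 - q) := by
          rw [range_eq_Ico]; exact geom_sum_Ico_le_of_lt_one (by positivity) hq1
      _ = 2 * n / (n - N) := by
          have hq : 1 - q = (n - N) / (2 * n) := by simp only [q]; field_simp; ring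
          rw [pow_zero, hq, one_div_div]
      _ ≤ 2 * (N + 1) := by
          rw [div_le_iff₀ (by linarith)]
          nlinarith
  rw [sum_Ico_eq_sum_range]
  calc ∑ m ∈ range (n - N), u ^ (N + m) * ((N + m)! : ℝ) ^ 2
      ≤ ∑ m ∈ range (n - N), u ^ N * (N ! : ℝ) ^ 2 * q ^ m :=
        sum_le_sum fun m hm => pow_mul_factorial_add_sq_le hu (by rw [mem_range] at hm; omega) hun
    _ = u ^ N * (N ! : ℝ) ^ 2 * ∑ m ∈ range (n - N), q ^ m := by rw [mul_sum]
    _ ≤ 2 * (N + 1) * (u ^ N * (N ! : ℝ) ^ 2) := by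
        rw [mul_comm (2 * _ : ℝ)]; gcongr

/-- For every real `C ≥ 1` there is `C'' ≥ 1` such that for every integer `k ≥ C`,
writing `N₀ = ⌊√(k/C)⌋`, and every `N` with `1 ≤ N ≤ N₀ - 1`,
`∑_{j=N}^{N₀-1} C^j (j!)² / k^j ≤ C''^N (N!)² / k^N`. -/
theorem stmt_3 (C : ℝ) (hC : 1 ≤ C) :
    ∃ C'' : ℝ, 1 ≤ C'' ∧ ∀ k : ℕ, C ≤ (k : ℝ) →
      ∀ N : ℕ, 1 ≤ N → N ≤ Nat.floor (Real.sqrt ((k : ℝ) / C)) - 1 →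
        ∑ j ∈ Finset.Icc N (Nat.floor (Real.sqrt ((k : ℝ) / C)) - 1),
            C ^ j * (j.factorial : ℝ) ^ 2 / (k : ℝ) ^ j ≤
          C'' ^ N * (N.factorial : ℝ) ^ 2 / (k : ℝ) ^ N := by
  refine ⟨4 * C, by linarith, fun k hk N hN1 hN => ?_⟩
  set N₀ := ⌊√((k : ℝ) / C)⌋₊
  have hk0 : (0 : ℝ) < k := by linarith
  have hNN₀ : N < N₀ := by omega
  have hN₀ : C / k * (N₀ : ℝ) ^ 2 ≤ 1 := by
    have hsq : (N₀ : ℝ) ^ 2 ≤ k / C := by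
      calc (N₀ : ℝ) ^ 2 ≤ √((k : ℝ) / C) ^ 2 := by gcongr; exact floor_le (Real.sqrt_nonneg _)
        _ = k / C := Real.sq_sqrt (by positivity)
    calc C / k * (N₀ : ℝ) ^ 2 ≤ C / k * (k / C) := by gcongr
      _ = 1 := by field_simp
  have hterm (j : ℕ) : C ^ j * (j ! : ℝ) ^ 2 / (k : ℝ) ^ j = (C / k) ^ j * (j ! : ℝ) ^ 2 := by
    rw [div_pow]; ring
  have hrhs :
      (4 * C) ^ N * (N ! : ℝ) ^ 2 / (k : ℝ) ^ N = 4 ^ N * ((C / k) ^ N * (N ! : ℝ) ^ 2) := by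
    rw [mul_pow, div_pow]; ring
  have hfour : 2 * (N + 1) ≤ 4 ^ N :=
    calc 2 * (N + 1) ≤ 2 ^ N * 2 ^ N :=
          Nat.mul_le_mul (Nat.le_self_pow (by omega) 2) Nat.lt_two_pow_self
      _ = 4 ^ N := by rw [← mul_pow]; norm_num
  rw [← Ico_add_one_right_eq_Icc, Nat.sub_add_cancel (by omega), hrhs]
  simp_rw [hterm]
  calc ∑ j ∈ Ico N N₀, (C / k) ^ j * (j ! : ℝ) ^ 2
      ≤ 2 * (N + 1) * ((C / k) ^ N * (N ! : ℝ) ^ 2) :=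
        sum_Ico_pow_mul_factorial_sq_le (by positivity) hNN₀ hN₀
    _ ≤ 4 ^ N * ((C / k) ^ N * (N ! : ℝ) ^ 2) := by gcongr; exact_mod_cast hfour
end

section
/- For every real number C ≥ 1 there exists a real constant C'' > 0 (depending only on C) such that for every integer k ≥ C, writing N₀ = ⌊(k/C)^{1/2}⌋, one has C^{N₀} (N₀!)² / k^{N₀} ≤ C'' · k^{1/2} · e^{−2 (k/C)^{1/2}}. -/
open Real

/-- Stirling upper bound: `n! ≤ e √n (n/e)^n`. -/
lemma factorial_le_stirling (n : ℕ) (hn : 1 ≤ n) :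
    (n.factorial : ℝ) ≤ Real.exp 1 * Real.sqrt n * ((n : ℝ) / Real.exp 1) ^ n := by
  obtain ⟨m, rfl⟩ := Nat.exists_eq_add_of_le' hn
  have h : Real.log (Stirling.stirlingSeq (m + 1)) ≤ Real.log (Stirling.stirlingSeq (0 + 1)) :=
    Stirling.log_stirlingSeq'_antitone (Nat.zero_le m)
  have h1 : (0:ℝ) < Stirling.stirlingSeq (0 + 1) := Stirling.stirlingSeq'_pos 0
  have h2 : (0:ℝ) < Stirling.stirlingSeq (m + 1) := Stirling.stirlingSeq'_pos m
  have hle : Stirling.stirlingSeq (m + 1) ≤ Stirling.stirlingSeq 1 := by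
    have := (Real.log_le_log_iff h2 h1).mp h
    simpa using this
  rw [Stirling.stirlingSeq_one] at hle
  set n := m + 1 with hn'
  have hnpos : (0:ℝ) < n := by positivity
  have hdef : Stirling.stirlingSeq n =
      (n.factorial : ℝ) / (Real.sqrt (2 * n) * ((n : ℝ) / Real.exp 1) ^ n) := rfl
  have hden : (0:ℝ) < Real.sqrt (2 * n) * ((n : ℝ) / Real.exp 1) ^ n := by positivity
  have key := (div_le_iff₀ hden).mp (hdef ▸ hle)
  calc (n.factorial : ℝ)
      ≤ Real.exp 1 / Real.sqrt 2 * (Real.sqrt (2 * n) * ((n : ℝ) / Real.exp 1) ^ n) := key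
    _ = Real.exp 1 * Real.sqrt n * ((n : ℝ) / Real.exp 1) ^ n := by
        rw [Real.sqrt_mul (by norm_num : (0:ℝ) ≤ 2)]
        have h2 : Real.sqrt 2 ≠ 0 := by positivity
        field_simp

/-- For every real `C ≥ 1` there is `C'' > 0` such that for every integer `k ≥ C`,
writing `N₀ = ⌊√(k/C)⌋`, one has `C^{N₀} (N₀!)² / k^{N₀} ≤ C'' √k e^{-2√(k/C)}`. -/
theorem stmt_4 (C : ℝ) (hC : 1 ≤ C) :
    ∃ C'' : ℝ, 0 < C'' ∧ ∀ k : ℕ, C ≤ (k : ℝ) →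
      C ^ Nat.floor (Real.sqrt ((k : ℝ) / C)) *
          ((Nat.floor (Real.sqrt ((k : ℝ) / C))).factorial : ℝ) ^ 2 /
          (k : ℝ) ^ Nat.floor (Real.sqrt ((k : ℝ) / C)) ≤
        C'' * Real.sqrt (k : ℝ) * Real.exp (-2 * Real.sqrt ((k : ℝ) / C)) := by
  refine ⟨Real.exp 4, Real.exp_pos 4, fun k hk => ?_⟩
  have hCpos : (0:ℝ) < C := lt_of_lt_of_le one_pos hC
  have hkpos : (0:ℝ) < k := lt_of_lt_of_le hCpos hk
  set x : ℝ := (k : ℝ) / C with hx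
  have hx1 : 1 ≤ x := (le_div_iff₀ hCpos).mpr (by linarith)
  have hxpos : 0 < x := lt_of_lt_of_le one_pos hx1
  have hsx1 : 1 ≤ Real.sqrt x := by
    rw [show (1:ℝ) = Real.sqrt 1 from (Real.sqrt_one).symm]
    exact Real.sqrt_le_sqrt hx1
  set N : ℕ := Nat.floor (Real.sqrt x) with hN
  have hN1 : 1 ≤ N := Nat.le_floor (by exact_mod_cast hsx1)
  have hNle : (N : ℝ) ≤ Real.sqrt x := Nat.floor_le (Real.sqrt_nonneg x)
  have hNgt : Real.sqrt x < N + 1 := Nat.lt_floor_add_one _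
  have hNsq : (N : ℝ) ^ 2 ≤ x := by
    have := pow_le_pow_left₀ (by positivity) hNle 2
    rwa [Real.sq_sqrt hxpos.le] at this
  have hst := factorial_le_stirling N hN1
  have hNpos : (0:ℝ) < N := by exact_mod_cast hN1
  have he2 : Real.exp 2 = Real.exp 1 ^ 2 := by
    rw [← Real.exp_nat_mul]; norm_num
  have hfac2 : ((N.factorial : ℝ)) ^ 2 ≤
      Real.exp 2 * (N : ℝ) * ((N : ℝ) ^ 2 / Real.exp 2) ^ N := by
    calc ((N.factorial : ℝ)) ^ 2 ≤
        (Real.exp 1 * Real.sqrt N * ((N : ℝ) / Real.exp 1) ^ N) ^ 2 := by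
          exact pow_le_pow_left₀ (by positivity) hst 2
      _ = Real.exp 2 * (N : ℝ) * ((N : ℝ) ^ 2 / Real.exp 2) ^ N := by
          rw [mul_pow, mul_pow, Real.sq_sqrt (by positivity : (0:ℝ) ≤ (N:ℝ)),
            ← pow_mul, mul_comm N 2, pow_mul, div_pow, he2]
  have hLHS : C ^ N * ((N.factorial : ℝ)) ^ 2 / (k : ℝ) ^ N
      = ((N.factorial : ℝ)) ^ 2 / x ^ N := by
    rw [hx, div_pow]
    field_simp
  rw [hLHS]
  have hxk : x ≤ (k : ℝ) := by
    rw [hx, div_le_iff₀ hCpos]; nlinarith [hkpos.le]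
  have hsxk : Real.sqrt x ≤ Real.sqrt (k : ℝ) := Real.sqrt_le_sqrt hxk
  have hexp : Real.exp (-2 * (N : ℝ)) ≤ Real.exp 2 * Real.exp (-2 * Real.sqrt x) := by
    rw [← Real.exp_add]
    apply Real.exp_le_exp.mpr
    nlinarith [hNgt]
  have hxN : (0:ℝ) < x ^ N := by positivity
  have hexpinv : Real.exp (-2 * (N : ℝ)) = (Real.exp 2 ^ N)⁻¹ := by
    rw [← Real.exp_nat_mul, ← Real.exp_neg]
    ring_nf
  calc ((N.factorial : ℝ)) ^ 2 / x ^ N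
      ≤ (Real.exp 2 * (N : ℝ) * ((N : ℝ) ^ 2 / Real.exp 2) ^ N) / x ^ N := by
        gcongr
    _ ≤ (Real.exp 2 * (N : ℝ) * (x / Real.exp 2) ^ N) / x ^ N := by
        gcongr
    _ = Real.exp 2 * (N : ℝ) * Real.exp (-2 * (N : ℝ)) := by
        rw [hexpinv, div_pow]
        field_simp
    _ ≤ Real.exp 2 * Real.sqrt (k:ℝ) * Real.exp (-2 * (N : ℝ)) := by
        gcongr
        exact hNle.trans hsxk
    _ ≤ Real.exp 2 * Real.sqrt (k:ℝ) * (Real.exp 2 * Real.exp (-2 * Real.sqrt x)) := by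
        gcongr
    _ = Real.exp 2 * Real.exp 2 * Real.sqrt (k:ℝ) * Real.exp (-2 * Real.sqrt x) := by
        ring
    _ = Real.exp 4 * Real.sqrt (k:ℝ) * Real.exp (-2 * Real.sqrt x) := by
        rw [← Real.exp_add]; norm_num
end

section
/- For every real number C ≥ 1 there exists a real constant C' > 0 (depending only on C) such that for every integer k ≥ C, writing N₀ = ⌊(k/C)^{1/2}⌋, one has ∑_{j=1}^{N₀−1} C^j (j!)² / k^j ≤ C' / k. -/
lemma pow6_le (j : ℕ) : j ^ 6 ≤ 16 * 4 ^ j := by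
  induction j with
  | zero => norm_num
  | succ n ih =>
    rcases lt_or_ge n 4 with h | h
    · interval_cases n <;> norm_num
    · have h6 : 4 * n ^ 5 ≤ n ^ 6 := by nlinarith [h, Nat.zero_le (n ^ 5)]
      have h5 : 4 * n ^ 4 ≤ n ^ 5 := by nlinarith [h, Nat.zero_le (n ^ 4)]
      have h4 : 4 * n ^ 3 ≤ n ^ 4 := by nlinarith [h, Nat.zero_le (n ^ 3)]
      have h3 : 4 * n ^ 2 ≤ n ^ 3 := by nlinarith [h, Nat.zero_le (n ^ 2)]
      have h2' : 4 * n ≤ n ^ 2 := by nlinarith [h]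
      have h2 : (n + 1) ^ 6 ≤ 4 * n ^ 6 := by nlinarith [h6, h5, h4, h3, h2', h]
      calc (n + 1) ^ 6 ≤ 4 * n ^ 6 := h2
        _ ≤ 4 * (16 * 4 ^ n) := by linarith
        _ = 16 * 4 ^ (n + 1) := by ring

lemma fact_mul_two_pow_le (j : ℕ) (hj : 1 ≤ j) :
    (j.factorial : ℝ) * 2 ^ j ≤ 2 * (j : ℝ) ^ (j + 1) := by
  induction j, hj using Nat.le_induction with
  | base => norm_num [Nat.factorial]
  | succ n hn ih =>
    have hn0 : (0:ℝ) < n := by exact_mod_cast hn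
    have key : 2 * (n:ℝ) ^ (n+1) ≤ ((n:ℝ)+1) ^ (n+1) := by
      have hb := one_add_mul_le_pow (a := 1/(n:ℝ)) (by have h0 : (0:ℝ) ≤ 1/(n:ℝ) := one_div_nonneg.mpr hn0.le; linarith) (n+1)
      have h2 : (2:ℝ) ≤ (1 + 1/(n:ℝ))^(n+1) := by
        have h3 : (1:ℝ) ≤ ((n+1 : ℕ) : ℝ) * (1/(n:ℝ)) := by
          rw [mul_one_div, le_div_iff₀ hn0]
          push_cast; linarith
        push_cast at hb h3 ⊢
        nlinarith
      calc 2 * (n:ℝ)^(n+1) ≤ (1+1/(n:ℝ))^(n+1) * (n:ℝ)^(n+1) :=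
            mul_le_mul_of_nonneg_right h2 (by positivity)
        _ = ((1+1/(n:ℝ)) * n)^(n+1) := (mul_pow _ _ _).symm
        _ = ((n:ℝ)+1)^(n+1) := by rw [show (1+1/(n:ℝ)) * n = (n:ℝ)+1 by field_simp]
    have hfs : ((n+1).factorial : ℝ) = ((n:ℝ)+1) * n.factorial := by
      rw [Nat.factorial_succ]; push_cast; ring
    calc ((n+1).factorial : ℝ) * 2 ^ (n+1)
        = ((n:ℝ)+1) * 2 * ((n.factorial : ℝ) * 2 ^ n) := by rw [hfs]; ring
      _ ≤ ((n:ℝ)+1) * 2 * (2 * (n:ℝ) ^ (n+1)) :=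
            mul_le_mul_of_nonneg_left ih (by positivity)
      _ = ((n:ℝ)+1) * (2 * (2 * (n:ℝ) ^ (n+1))) := by ring
      _ ≤ ((n:ℝ)+1) * (2 * ((n:ℝ)+1) ^ (n+1)) := by
            have := mul_le_mul_of_nonneg_left key (show (0:ℝ) ≤ 2 by norm_num)
            exact mul_le_mul_of_nonneg_left this (by positivity)
      _ = 2 * (((n:ℝ)+1)) ^ (n+1+1) := by ring
      _ = 2 * ((n+1 : ℕ):ℝ) ^ (n+1+1) := by push_cast; ring

/-- For every real `C ≥ 1` there is `C' > 0` such that for every integer `k ≥ C`,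
writing `N₀ = ⌊√(k/C)⌋`, one has `∑_{j=1}^{N₀-1} C^j (j!)² / k^j ≤ C' / k`. -/
theorem stmt_6 (C : ℝ) (hC : 1 ≤ C) :
    ∃ C' : ℝ, 0 < C' ∧ ∀ k : ℕ, C ≤ (k : ℝ) →
      ∑ j ∈ Finset.Icc 1 (Nat.floor (Real.sqrt ((k : ℝ) / C)) - 1),
          C ^ j * (j.factorial : ℝ) ^ 2 / (k : ℝ) ^ j ≤ C' / (k : ℝ) := by
  refine ⟨C + 64 * C ^ 2, by positivity, fun k hk => ?_⟩
  have hC0 : (0:ℝ) < C := by linarith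
  have hk0 : (0:ℝ) < k := lt_of_lt_of_le (by linarith) hk
  have hk1 : (1:ℝ) ≤ k := le_trans hC hk
  set N : ℕ := Nat.floor (Real.sqrt ((k : ℝ) / C)) with hN
  set m : ℕ := N - 1 with hm
  have hNle : (N:ℝ) ≤ Real.sqrt ((k:ℝ)/C) := Nat.floor_le (Real.sqrt_nonneg _)
  have hNk : (N:ℝ) ≤ (k:ℝ) := by
    have h1 : Real.sqrt ((k:ℝ)/C) ≤ (k:ℝ) := by
      rw [Real.sqrt_le_left hk0.le, div_le_iff₀ hC0]
      nlinarith
    linarith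
  have hmN : (m:ℝ) ≤ (N:ℝ) := by exact_mod_cast Nat.cast_le.mpr (Nat.sub_le N 1)
  -- bound for terms with 2 ≤ j ≤ m
  have hterm : ∀ j ∈ Finset.Icc 2 m,
      C ^ j * (j.factorial : ℝ) ^ 2 / (k:ℝ) ^ j ≤ 64 * C ^ 2 / (k:ℝ) ^ 2 := by
    intro j hj
    rw [Finset.mem_Icc] at hj
    obtain ⟨hj2, hjm⟩ := hj
    have hj1 : 1 ≤ j := le_trans (by norm_num) hj2
    have hjN : (j:ℝ) ≤ Real.sqrt ((k:ℝ)/C) := by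
      have : (j:ℝ) ≤ (N:ℝ) := by
        exact_mod_cast Nat.cast_le.mpr (le_trans hjm (Nat.sub_le N 1))
      linarith
    have hjk : C * (j:ℝ)^2 ≤ (k:ℝ) := by
      have hsq : (j:ℝ)^2 ≤ (k:ℝ)/C := by
        nlinarith [Real.sq_sqrt (show (0:ℝ) ≤ (k:ℝ)/C by positivity),
          Real.sqrt_nonneg ((k:ℝ)/C), Nat.cast_nonneg (α := ℝ) j]
      calc C * (j:ℝ)^2 ≤ C * ((k:ℝ)/C) := mul_le_mul_of_nonneg_left hsq hC0.le
        _ = (k:ℝ) := by field_simp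
    set b : ℝ := C * (j:ℝ)^2 / (k:ℝ) with hbdef
    have hb0 : 0 ≤ b := by positivity
    have hb1 : b ≤ 1 := by rw [hbdef, div_le_one hk0]; exact hjk
    have hbj : b ^ j ≤ b ^ 2 := pow_le_pow_of_le_one hb0 hb1 hj2
    -- factorial bound squared
    have hfact : (j.factorial : ℝ)^2 * 4 ^ j ≤ 4 * (j:ℝ) ^ (2*j+2) := by
      have h := fact_mul_two_pow_le j hj1
      have hnn : (0:ℝ) ≤ (j.factorial : ℝ) * 2 ^ j := by positivity
      have := mul_self_le_mul_self hnn h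
      calc (j.factorial : ℝ)^2 * 4 ^ j
          = ((j.factorial : ℝ) * 2 ^ j) * ((j.factorial : ℝ) * 2 ^ j) := by
            rw [show (4:ℝ) = 2^2 by norm_num, ← pow_mul, show 2*j = j+j from two_mul j,
              pow_add]; ring
        _ ≤ (2 * (j:ℝ) ^ (j + 1)) * (2 * (j:ℝ) ^ (j + 1)) := this
        _ = 4 * (j:ℝ) ^ (2*j+2) := by
            rw [show 2*j+2 = (j+1)+(j+1) by ring, pow_add]; ring
    have h4j : (0:ℝ) < 4 ^ j := by positivity
    have hkj : (0:ℝ) < (k:ℝ) ^ j := by positivity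
    -- main chain
    have hb2 : b ^ 2 = C^2 * (j:ℝ)^4 / (k:ℝ)^2 := by
      rw [hbdef, div_pow, mul_pow, ← pow_mul]
    have hbjval : b ^ j = C^j * (j:ℝ)^(2*j) / (k:ℝ)^j := by
      rw [hbdef, div_pow, mul_pow, ← pow_mul]
    have hj6 : (j:ℝ)^6 ≤ 16 * 4 ^ j := by exact_mod_cast pow6_le j
    calc C ^ j * (j.factorial : ℝ) ^ 2 / (k:ℝ) ^ j
        ≤ C ^ j * (4 * (j:ℝ) ^ (2*j+2) / 4 ^ j) / (k:ℝ) ^ j := by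
          gcongr
          rw [le_div_iff₀ h4j]
          linarith [hfact]
      _ = 4 * (j:ℝ)^2 / 4 ^ j * b ^ j := by
          rw [hbjval, show 2*j+2 = 2 + 2*j by ring, pow_add]
          field_simp
      _ ≤ 4 * (j:ℝ)^2 / 4 ^ j * b ^ 2 := by
          apply mul_le_mul_of_nonneg_left hbj (by positivity)
      _ = 4 * (j:ℝ)^6 / 4 ^ j * (C^2 / (k:ℝ)^2) := by
          rw [hb2, show (j:ℝ)^6 = (j:ℝ)^2 * (j:ℝ)^4 by ring]
          field_simp
      _ ≤ 4 * (16 * 4 ^ j) / 4 ^ j * (C^2 / (k:ℝ)^2) := by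
          gcongr
      _ = 64 * C ^ 2 / (k:ℝ) ^ 2 := by
          field_simp
          ring
  -- now split the sum
  rcases Nat.eq_zero_or_pos m with hm0 | hm1
  · rw [hm0, show Finset.Icc 1 0 = ∅ from Finset.Icc_eq_empty (by omega)]
    simp only [Finset.sum_empty]
    positivity
  · have hins : Finset.Icc 1 m = insert 1 (Finset.Icc 2 m) := by
      ext x
      simp only [Finset.mem_Icc, Finset.mem_insert]
      omega
    have hnotmem : 1 ∉ Finset.Icc 2 m := by simp
    rw [hins, Finset.sum_insert hnotmem]
    have hcard : ((Finset.Icc 2 m).card : ℝ) ≤ (k:ℝ) := by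
      have h1 : (Finset.Icc 2 m).card ≤ m := by
        rw [Nat.card_Icc]; omega
      have h2 : ((Finset.Icc 2 m).card : ℝ) ≤ (m:ℝ) := by exact_mod_cast h1
      linarith
    have hsum2 : ∑ j ∈ Finset.Icc 2 m, C ^ j * (j.factorial : ℝ) ^ 2 / (k:ℝ) ^ j
        ≤ 64 * C ^ 2 / (k:ℝ) := by
      calc ∑ j ∈ Finset.Icc 2 m, C ^ j * (j.factorial : ℝ) ^ 2 / (k:ℝ) ^ j
          ≤ (Finset.Icc 2 m).card • (64 * C ^ 2 / (k:ℝ)^2) :=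
            Finset.sum_le_card_nsmul _ _ _ hterm
        _ = ((Finset.Icc 2 m).card : ℝ) * (64 * C ^ 2 / (k:ℝ)^2) := nsmul_eq_mul _ _
        _ ≤ (k:ℝ) * (64 * C ^ 2 / (k:ℝ)^2) :=
            mul_le_mul_of_nonneg_right hcard (by positivity)
        _ = 64 * C ^ 2 / (k:ℝ) := by
            field_simp
    have h1term : C ^ 1 * ((Nat.factorial 1 : ℕ) : ℝ) ^ 2 / (k:ℝ) ^ 1 = C / k := by
      norm_num [Nat.factorial]
    rw [h1term]
    have heq : (C + 64 * C ^ 2) / (k:ℝ) = C / k + 64 * C^2 / k := by ring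
    rw [heq]
    linarith
end

section
/- Let n ≥ 1 be a natural number, let C ≥ 1 be a real number, and set A = 2^{9n+6} C^7. Let a : ℕ × ℕ^n → ℝ be a family of nonnegative reals indexed by pairs (m, ξ) of a natural number and a multi-index, such that a(0, 0) = 1, a(0, ξ) = 0 for every multi-index ξ ≠ 0, and for every m ≥ 1 and every multi-index ξ: a(m, ξ) ≤ ∑_{l=1}^{m} ∑_{δ : |δ| = l} ∑_{α ≤ δ} ∑_{β ≤ δ} ∑_{γ : |γ| ≤ |α+β|} ∑_{ξ₀ ≤ ξ} a(m−l, γ+ξ₀) · binom(γ+ξ₀, ξ₀) · C(2m+1, 2l)^{−1} · (δ!/(2l)!) · binom(α + |γ|𝟙, |γ|𝟙) · binom(β + |γ|𝟙, |γ|𝟙) · C^{|ξ−ξ₀| + 2|δ| + |γ| + 1}. Then for every m ∈ ℕ and every multi-index ξ ∈ ℕ^n one has a(m, ξ) ≤ C(2m + |ξ|, |ξ|) · A^m · (2C)^{|ξ|}. -/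
/-!
Strong induction on `m`. In a summand of the recursion, the inductive bound for
`a (m - l) (γ + ξ₀)` contributes `C(2(m-l) + |γ+ξ₀|, |γ+ξ₀|)`; together with `∏ C(γᵢ+ξ₀ᵢ, ξ₀ᵢ)`
this is at most `C(2m + |ξ|, |ξ|) · C(2m+1, 2l)` (trinomial revision and `|γ| ≤ 2l`), which cancels
the factor `C(2m+1, 2l)⁻¹`. Every other factor, and the number of multi-indices `δ, α, β, γ`, is
at most `2^{O(nl)} C^{O(l)}`, while `∑_{ξ₀ ≤ ξ} 2^{|ξ₀|} ≤ 2^{n+|ξ|}`. So the `l`-th layer of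
the recursion is at most `2ⁿ C(2m+|ξ|, |ξ|) (2C)^{|ξ|} A^{m-l} (A/4ⁿ)^l`, and the geometric sum
`∑_{l ≥ 1} 4^{-nl} ≤ 2 · 4^{-n}` absorbs the `2ⁿ`.
-/

open Finset

namespace Nat

theorem choose_le_choose_add_add (p k j : ℕ) : p.choose k ≤ (p + j).choose (k + j) := by
  induction j with
  | zero => rfl
  | succ j ih => exact ih.trans ((choose_succ_succ' _ _).symm ▸ Nat.le_add_right _ _)

theorem choose_le_choose_of_le_of_add_le {p k q r : ℕ} (hkr : k ≤ r) (h : p + r ≤ q + k) :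
    p.choose k ≤ q.choose r := by
  calc p.choose k ≤ (p + (r - k)).choose (k + (r - k)) := choose_le_choose_add_add p k (r - k)
    _ ≤ q.choose r := by rw [Nat.add_sub_cancel' hkr]; exact choose_le_choose r (by omega)

theorem choose_mul_choose_le_choose_add (a b c d : ℕ) :
    a.choose b * c.choose d ≤ (a + c).choose (b + d) := by
  rw [add_choose_eq]
  exact single_le_sum (f := fun ij : ℕ × ℕ => a.choose ij.1 * c.choose ij.2)
    (fun _ _ => Nat.zero_le _) (a := (b, d)) (mem_antidiagonal.mpr rfl)

theorem prod_choose_le_choose_sum {ι : Type*} (s : Finset ι) (f g : ι → ℕ) :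
    ∏ i ∈ s, (f i + g i).choose (g i) ≤
      (∑ i ∈ s, f i + ∑ i ∈ s, g i).choose (∑ i ∈ s, g i) := by
  classical
  induction s using Finset.induction with
  | empty => simp
  | insert a s ha ih =>
    rw [prod_insert ha, sum_insert ha, sum_insert ha, add_add_add_comm]
    exact (Nat.mul_le_mul_left _ ih).trans (choose_mul_choose_le_choose_add _ _ _ _)

theorem choose_mul_prod_choose_le {ι : Type*} [Fintype ι] {m l S : ℕ} {γ ζ : ι → ℕ}
    (hlm : l ≤ m) (hγ : ∑ i, γ i ≤ 2 * l) (hζ : ∑ i, ζ i ≤ S) :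
    (2 * (m - l) + ∑ i, (γ + ζ) i).choose (∑ i, (γ + ζ) i) * ∏ i, (γ i + ζ i).choose (ζ i) ≤
      (2 * m + S).choose S * (2 * m + 1).choose (2 * l) := by
  set g := ∑ i, γ i
  set s := ∑ i, ζ i
  have hsum : ∑ i, (γ + ζ) i = g + s := sum_add_distrib
  rw [hsum]
  calc _ ≤ (2 * (m - l) + (g + s)).choose (g + s) * (g + s).choose s :=
        Nat.mul_le_mul_left _ (prod_choose_le_choose_sum _ _ _)
    _ = (2 * (m - l) + (g + s)).choose s * (2 * (m - l) + g).choose g := by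
        rw [choose_mul (by omega)]; congr 2 <;> omega
    _ ≤ _ := Nat.mul_le_mul (choose_le_choose_of_le_of_add_le hζ (by omega))
        (choose_le_choose_of_le_of_add_le hγ (by omega))

theorem prod_factorial_le_factorial_of_sum_le {ι : Type*} (s : Finset ι) (f : ι → ℕ) {N : ℕ}
    (h : ∑ i ∈ s, f i ≤ N) : ∏ i ∈ s, (f i)! ≤ N ! :=
  (le_of_dvd (factorial_pos _) (prod_factorial_dvd_factorial_sum s f)).trans (factorial_le h)

theorem prod_add_choose_le_two_pow {ι : Type*} [Fintype ι] {τ : ι → ℕ} {g k : ℕ}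
    (hτ : ∑ i, τ i ≤ k) (hg : g ≤ 2 * k) :
    ∏ i, (τ i + g).choose g ≤ 2 ^ (k + 2 * k * Fintype.card ι) := by
  calc ∏ i, (τ i + g).choose g ≤ ∏ i, 2 ^ (τ i + g) := prod_le_prod' fun _ _ => choose_le_two_pow _ _
    _ = 2 ^ (∑ i, τ i + Fintype.card ι * g) := by
        rw [prod_pow_eq_pow_sum, sum_add_distrib, sum_const, Finset.card_univ, smul_eq_mul]
    _ ≤ _ := Nat.pow_le_pow_right two_pos (by nlinarith)

end Nat

namespace Fintype

variable {ι : Type*} [Fintype ι] [DecidableEq ι]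

theorem mem_piFinset_Iic {ζ ξ : ι → ℕ} : ζ ∈ piFinset (fun i => Iic (ξ i)) ↔ ζ ≤ ξ := by
  simp [Pi.le_def]

theorem card_piFinset_Iic_le_two_pow (δ : ι → ℕ) :
    #(piFinset fun i => Iic (δ i)) ≤ 2 ^ ∑ i, δ i := by
  rw [card_piFinset]
  simp only [Nat.card_Iic]
  exact (prod_le_prod' fun i _ => (δ i).lt_two_pow_self).trans_eq (prod_pow_eq_pow_sum ..)

theorem card_filter_piFinset_const_Iic_le (p : (ι → ℕ) → Prop) [DecidablePred p] (k : ℕ) :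
    #((piFinset fun _ : ι => Iic k).filter p) ≤ 2 ^ (card ι * k) :=
  (card_filter_le _ _).trans ((card_piFinset_Iic_le_two_pow _).trans_eq (by simp))

theorem sum_piFinset_Iic_two_pow_le (ξ : ι → ℕ) :
    ∑ ζ ∈ piFinset (fun i => Iic (ξ i)), 2 ^ ∑ i, ζ i ≤ 2 ^ (∑ i, ξ i + card ι) := by
  calc ∑ ζ ∈ piFinset (fun i => Iic (ξ i)), 2 ^ ∑ i, ζ i
      = ∏ i, ∑ j ∈ Iic (ξ i), 2 ^ j := by
        rw [prod_univ_sum]; simp_rw [prod_pow_eq_pow_sum]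
    _ ≤ ∏ i, 2 ^ (ξ i + 1) := prod_le_prod' fun i _ =>
        (Nat.geomSum_lt le_rfl fun k hk => Nat.lt_succ_of_le (mem_Iic.1 hk)).le
    _ = _ := by
        rw [prod_pow_eq_pow_sum, sum_add_distrib, sum_const, Finset.card_univ, smul_eq_mul, mul_one]

end Fintype

theorem Finset.sum_le_mul_of_card_le {ι : Type*} {s : Finset ι} {f : ι → ℝ} {N : ℕ} {W : ℝ}
    (hW : 0 ≤ W) (hs : #s ≤ N) (h : ∀ x ∈ s, f x ≤ W) : ∑ x ∈ s, f x ≤ N * W :=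
  (sum_le_card_nsmul s f W h).trans (by rw [nsmul_eq_mul]; gcongr)

theorem sum_Icc_one_pow_le_two_mul {r : ℝ} (h0 : 0 ≤ r) (h : r ≤ 1 / 2) (m : ℕ) :
    ∑ l ∈ Icc 1 m, r ^ l ≤ 2 * r := by
  have hIcc : Icc 1 m = Ico 1 (m + 1) := by ext; simp
  rw [hIcc]
  refine (geom_sum_Ico_le_of_lt_one h0 (by linarith)).trans ?_
  rw [pow_one, div_le_iff₀ (by linarith)]
  nlinarith

section Recursion

variable {n : ℕ} (C : ℝ) (a : ℕ → (Fin n → ℕ) → ℝ)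

noncomputable def recursionTerm (m l : ℕ) (ξ δ α β γ ξ₀ : Fin n → ℕ) : ℝ :=
  a (m - l) (γ + ξ₀) *
    (∏ i, ((γ i + ξ₀ i).choose (ξ₀ i) : ℝ)) *
    (((2 * m + 1).choose (2 * l) : ℝ))⁻¹ *
    ((∏ i, ((δ i).factorial : ℝ)) / ((2 * l).factorial : ℝ)) *
    (∏ i, ((α i + ∑ j, γ j).choose (∑ j, γ j) : ℝ)) *
    (∏ i, ((β i + ∑ j, γ j).choose (∑ j, γ j) : ℝ)) *
    C ^ ((∑ i, (ξ i - ξ₀ i)) + 2 * (∑ i, δ i) + (∑ i, γ i) + 1)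

noncomputable def recursionSumAt (m l : ℕ) (ξ : Fin n → ℕ) : ℝ :=
  ∑ δ ∈ (Fintype.piFinset fun _ : Fin n => Iic l).filter (fun δ => ∑ i, δ i = l),
    ∑ α ∈ Fintype.piFinset (fun i => Iic (δ i)),
      ∑ β ∈ Fintype.piFinset (fun i => Iic (δ i)),
        ∑ γ ∈ (Fintype.piFinset fun _ : Fin n => Iic (∑ i, (α i + β i))).filter
            (fun γ => ∑ i, γ i ≤ ∑ i, (α i + β i)),
          ∑ ξ₀ ∈ Fintype.piFinset (fun i => Iic (ξ i)),
            recursionTerm C a m l ξ δ α β γ ξ₀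

/-- Unfolds to the right-hand side of the recursive inequality for `a m ξ` in `stmt_11`. -/
noncomputable def recursionSum (m : ℕ) (ξ : Fin n → ℕ) : ℝ :=
  ∑ l ∈ Icc 1 m, recursionSumAt C a m l ξ

variable {C a}

theorem two_mul_pow_mul_pow_le (hC : 1 ≤ C) {g s S l : ℕ} (hl : 1 ≤ l) (hg : g ≤ 2 * l)
    (hsS : s ≤ S) :
    (2 * C) ^ (g + s) * C ^ (S - s + 2 * l + g + 1) ≤
      2 ^ s * C ^ S * (2 ^ (2 * l) * C ^ (7 * l)) := by
  obtain ⟨d, rfl⟩ := Nat.exists_eq_add_of_le hsS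
  rw [Nat.add_sub_cancel_left]
  calc (2 * C) ^ (g + s) * C ^ (d + 2 * l + g + 1)
      = 2 ^ s * C ^ (s + d) * (2 ^ g * C ^ (2 * l + 2 * g + 1)) := by ring
    _ ≤ 2 ^ s * C ^ (s + d) * (2 ^ (2 * l) * C ^ (7 * l)) := by
      gcongr
      · exact one_le_two
      · omega

theorem recursionTerm_le {A : ℝ} (hC : 1 ≤ C) (hA : 0 ≤ A) {m l : ℕ} (hl : 1 ≤ l) (hlm : l ≤ m)
    {ξ δ α β γ ξ₀ : Fin n → ℕ} (hδ : ∑ i, δ i = l) (hα : α ≤ δ) (hβ : β ≤ δ)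
    (hγ : ∑ i, γ i ≤ 2 * l) (hξ₀ : ξ₀ ≤ ξ)
    (ha : a (m - l) (γ + ξ₀) ≤ (2 * (m - l) + ∑ i, (γ + ξ₀) i).choose (∑ i, (γ + ξ₀) i) *
      A ^ (m - l) * (2 * C) ^ ∑ i, (γ + ξ₀) i) :
    recursionTerm C a m l ξ δ α β γ ξ₀ ≤
      (2 * m + ∑ i, ξ i).choose (∑ i, ξ i) * A ^ (m - l) * C ^ (∑ i, ξ i) *
        (2 ^ ((4 + 4 * n) * l) * C ^ (7 * l)) * 2 ^ ∑ i, ξ₀ i := by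
  set g := ∑ i, γ i
  set s := ∑ i, ξ₀ i
  set S := ∑ i, ξ i
  have hsS : s ≤ S := sum_le_sum fun i _ => hξ₀ i
  have hsum : ∑ i, (γ + ξ₀) i = g + s := sum_add_distrib
  rw [hsum] at ha
  have hbin : ((2 * (m - l) + (g + s)).choose (g + s) : ℝ) *
      (∏ i, ((γ i + ξ₀ i).choose (ξ₀ i) : ℝ)) * (((2 * m + 1).choose (2 * l) : ℝ))⁻¹ ≤
      (2 * m + S).choose S := by
    rw [← div_eq_mul_inv, div_le_iff₀ (by exact_mod_cast Nat.choose_pos (by omega))]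
    exact_mod_cast hsum ▸ Nat.choose_mul_prod_choose_le hlm hγ hsS
  have hfact : (∏ i, ((δ i).factorial : ℝ)) / ((2 * l).factorial : ℝ) ≤ 1 := by
    rw [div_le_one (by positivity)]
    exact_mod_cast Nat.prod_factorial_le_factorial_of_sum_le _ _ (by omega)
  have hchoose : ∀ τ ≤ δ, (∏ i, ((τ i + g).choose g : ℝ)) ≤ 2 ^ (l + 2 * l * n) := fun τ hτ => by
    have := Nat.prod_add_choose_le_two_pow (hδ ▸ sum_le_sum fun i _ => hτ i) hγ
    rw [Fintype.card_fin] at this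
    exact_mod_cast this
  have hpow : (2 * C) ^ (g + s) * C ^ (∑ i, (ξ i - ξ₀ i) + 2 * ∑ i, δ i + g + 1) ≤
      2 ^ s * C ^ S * (2 ^ (2 * l) * C ^ (7 * l)) := by
    rw [show ∑ i, (ξ i - ξ₀ i) = S - s from sum_tsub_distrib _ fun i _ => hξ₀ i, hδ]
    exact two_mul_pow_mul_pow_le hC hl hγ hsS
  calc recursionTerm C a m l ξ δ α β γ ξ₀
      ≤ ((2 * (m - l) + (g + s)).choose (g + s) * A ^ (m - l) * (2 * C) ^ (g + s)) *
          (∏ i, ((γ i + ξ₀ i).choose (ξ₀ i) : ℝ)) * (((2 * m + 1).choose (2 * l) : ℝ))⁻¹ * 1 *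
          2 ^ (l + 2 * l * n) * 2 ^ (l + 2 * l * n) *
          C ^ (∑ i, (ξ i - ξ₀ i) + 2 * ∑ i, δ i + g + 1) := by
        unfold recursionTerm
        gcongr
        exacts [hchoose α hα, hchoose β hβ]
    _ = (((2 * (m - l) + (g + s)).choose (g + s) : ℝ) *
          (∏ i, ((γ i + ξ₀ i).choose (ξ₀ i) : ℝ)) * (((2 * m + 1).choose (2 * l) : ℝ))⁻¹) *
          A ^ (m - l) * ((2 * C) ^ (g + s) * C ^ (∑ i, (ξ i - ξ₀ i) + 2 * ∑ i, δ i + g + 1)) *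
          2 ^ (2 * l + 4 * l * n) := by ring
    _ ≤ (2 * m + S).choose S * A ^ (m - l) * (2 ^ s * C ^ S * (2 ^ (2 * l) * C ^ (7 * l))) *
          2 ^ (2 * l + 4 * l * n) := by gcongr
    _ = _ := by ring

theorem recursionSumAt_le {A : ℝ} (hC : 1 ≤ C) (hA : 0 ≤ A) {m l : ℕ} (hl : 1 ≤ l) (hlm : l ≤ m)
    (ξ : Fin n → ℕ) (IH : ∀ ζ, a (m - l) ζ ≤
      (2 * (m - l) + ∑ i, ζ i).choose (∑ i, ζ i) * A ^ (m - l) * (2 * C) ^ ∑ i, ζ i) :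
    recursionSumAt C a m l ξ ≤ (2 * m + ∑ i, ξ i).choose (∑ i, ξ i) * (2 * C) ^ (∑ i, ξ i) * 2 ^ n *
      (A ^ (m - l) * (2 ^ ((7 * n + 6) * l) * C ^ (7 * l))) := by
  set S := ∑ i, ξ i
  set X : ℝ := (2 * m + S).choose S * A ^ (m - l) * C ^ S * (2 ^ ((4 + 4 * n) * l) * C ^ (7 * l))
  have hinner : ∀ δ, ∑ i, δ i = l → ∀ α ≤ δ, ∀ β ≤ δ, ∀ γ, ∑ i, γ i ≤ 2 * l →
      ∑ ξ₀ ∈ Fintype.piFinset (fun i => Iic (ξ i)), recursionTerm C a m l ξ δ α β γ ξ₀ ≤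
        X * 2 ^ (S + n) := by
    intro δ hδ α hα β hβ γ hγ
    calc _ ≤ ∑ ξ₀ ∈ Fintype.piFinset (fun i => Iic (ξ i)), X * 2 ^ ∑ i, ξ₀ i :=
          sum_le_sum fun ξ₀ hξ₀ =>
            recursionTerm_le hC hA hl hlm hδ hα hβ hγ (Fintype.mem_piFinset_Iic.1 hξ₀) (IH _)
      _ = X * ((∑ ξ₀ ∈ Fintype.piFinset (fun i => Iic (ξ i)), 2 ^ ∑ i, ξ₀ i : ℕ) : ℝ) := by
          rw [← mul_sum]; push_cast; rfl
      _ ≤ X * 2 ^ (S + n) := by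
          gcongr
          have := Fintype.sum_piFinset_Iic_two_pow_le ξ
          rw [Fintype.card_fin] at this
          exact_mod_cast this
  calc recursionSumAt C a m l ξ
      ≤ (2 ^ (n * l) : ℕ) * ((2 ^ l : ℕ) * ((2 ^ l : ℕ) * ((2 ^ (n * (2 * l)) : ℕ) *
          (X * 2 ^ (S + n))))) := by
        refine sum_le_mul_of_card_le (by positivity)
          ((Fintype.card_filter_piFinset_const_Iic_le _ _).trans_eq (by simp)) fun δ hδ => ?_
        have hδ : ∑ i, δ i = l := (mem_filter.1 hδ).2
        have hcard := (Fintype.card_piFinset_Iic_le_two_pow δ).trans_eq (by rw [hδ])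
        refine sum_le_mul_of_card_le (by positivity) hcard fun α hα => ?_
        refine sum_le_mul_of_card_le (by positivity) hcard fun β hβ => ?_
        rw [Fintype.mem_piFinset_Iic] at hα hβ
        have hαβ : ∑ i, (α i + β i) ≤ 2 * l :=
          (sum_le_sum fun i _ => add_le_add (hα i) (hβ i)).trans_eq (by rw [sum_add_distrib, hδ, two_mul])
        refine sum_le_mul_of_card_le (by positivity)
          ((Fintype.card_filter_piFinset_const_Iic_le _ _).trans
            (by simpa using Nat.pow_le_pow_right two_pos (Nat.mul_le_mul_left n hαβ)))
          fun γ hγ => hinner δ hδ α hα β hβ γ ((mem_filter.1 hγ).2.trans hαβ)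
    _ = _ := by push_cast; ring

theorem recursionSum_le (hn : 1 ≤ n) (hC : 1 ≤ C) {m : ℕ} (ξ : Fin n → ℕ)
    (IH : ∀ k < m, ∀ ζ, a k ζ ≤
      (2 * k + ∑ i, ζ i).choose (∑ i, ζ i) * (2 ^ (9 * n + 6) * C ^ 7) ^ k * (2 * C) ^ ∑ i, ζ i) :
    recursionSum C a m ξ ≤ (2 * m + ∑ i, ξ i).choose (∑ i, ξ i) * (2 ^ (9 * n + 6) * C ^ 7) ^ m *
      (2 * C) ^ ∑ i, ξ i := by
  set A : ℝ := 2 ^ (9 * n + 6) * C ^ 7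
  set B : ℝ := (2 * m + ∑ i, ξ i).choose (∑ i, ξ i) * (2 * C) ^ ∑ i, ξ i
  set r : ℝ := (4 ^ n)⁻¹ with hr_def
  have h4 : (4 : ℝ) ^ n = 2 ^ n * 2 ^ n := by rw [← mul_pow]; norm_num
  have h2n : (2 : ℝ) ≤ 2 ^ n := le_self_pow₀ one_le_two (by omega)
  have hr : r ≤ 1 / 2 := by
    rw [inv_le_comm₀ (by positivity) (by norm_num), h4]; nlinarith
  have hr2 : 2 ^ n * (2 * r) ≤ 1 := by
    rw [hr_def, h4, mul_inv]; field_simp; linarith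
  have hAr : ∀ l ≤ m, A ^ (m - l) * (2 ^ ((7 * n + 6) * l) * C ^ (7 * l)) = A ^ m * r ^ l := by
    intro l hl
    have hK : (2 : ℝ) ^ (7 * n + 6) * C ^ 7 = A * r := by
      rw [hr_def, h4]; field_simp; ring
    rw [pow_mul, pow_mul, ← mul_pow, hK, mul_pow A, ← mul_assoc, ← pow_add, Nat.sub_add_cancel hl]
  calc recursionSum C a m ξ
      ≤ ∑ l ∈ Icc 1 m, B * 2 ^ n * (A ^ m * r ^ l) := by
        refine sum_le_sum fun l hl => ?_
        obtain ⟨hl1, hlm⟩ := mem_Icc.1 hl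
        rw [← hAr l hlm]
        exact recursionSumAt_le hC (by positivity) hl1 hlm ξ (IH _ (by omega))
    _ = B * A ^ m * (2 ^ n * ∑ l ∈ Icc 1 m, r ^ l) := by
        rw [mul_sum, mul_sum]; exact sum_congr rfl fun l _ => by ring
    _ ≤ B * A ^ m * (2 ^ n * (2 * r)) := by
        gcongr; exact sum_Icc_one_pow_le_two_mul (by positivity) hr m
    _ ≤ B * A ^ m := mul_le_of_le_one_right (by positivity) hr2
    _ = _ := by ring

end Recursion

theorem stmt_11_general (n : ℕ) (hn : 1 ≤ n) (C : ℝ) (hC : 1 ≤ C)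
    (a : ℕ → (Fin n → ℕ) → ℝ)
    (h00 : a 0 0 = 1)
    (h0 : ∀ ξ : Fin n → ℕ, ξ ≠ 0 → a 0 ξ = 0)
    (hrec : ∀ m : ℕ, 1 ≤ m → ∀ ξ : Fin n → ℕ,
      a m ξ ≤
        ∑ l ∈ Finset.Icc 1 m,
          ∑ δ ∈ (Fintype.piFinset fun _ : Fin n => Finset.Iic l).filter
              (fun δ => ∑ i, δ i = l),
            ∑ α ∈ Fintype.piFinset (fun i => Finset.Iic (δ i)),
              ∑ β ∈ Fintype.piFinset (fun i => Finset.Iic (δ i)),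
                ∑ γ ∈ (Fintype.piFinset fun _ : Fin n =>
                      Finset.Iic (∑ i, (α i + β i))).filter
                    (fun γ => ∑ i, γ i ≤ ∑ i, (α i + β i)),
                  ∑ ξ₀ ∈ Fintype.piFinset (fun i => Finset.Iic (ξ i)),
                    a (m - l) (γ + ξ₀) *
                      (∏ i, ((γ i + ξ₀ i).choose (ξ₀ i) : ℝ)) *
                      (((2 * m + 1).choose (2 * l) : ℝ))⁻¹ *
                      ((∏ i, ((δ i).factorial : ℝ)) / ((2 * l).factorial : ℝ)) *
                      (∏ i, ((α i + ∑ j, γ j).choose (∑ j, γ j) : ℝ)) *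
                      (∏ i, ((β i + ∑ j, γ j).choose (∑ j, γ j) : ℝ)) *
                      C ^ ((∑ i, (ξ i - ξ₀ i)) + 2 * (∑ i, δ i) + (∑ i, γ i) + 1)) :
    ∀ (m : ℕ) (ξ : Fin n → ℕ),
      a m ξ ≤ ((2 * m + ∑ i, ξ i).choose (∑ i, ξ i) : ℝ) *
        (2 ^ (9 * n + 6) * C ^ 7) ^ m * (2 * C) ^ (∑ i, ξ i) := by
  intro m
  induction m using Nat.strong_induction_on with
  | _ m IH =>
    intro ξ
    rcases Nat.eq_zero_or_pos m with rfl | hm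
    · by_cases hξ : ξ = 0
      · simp [hξ, h00]
      · rw [h0 ξ hξ]
        have : (0 : ℝ) ≤ 2 * C := by linarith
        positivity
    · exact (hrec m hm ξ).trans (recursionSum_le hn hC ξ IH)

/-- The core inductive bound in the proof of Theorem 1.4: if a nonnegative family
`a(m, ξ)` satisfies `a(0,0) = 1`, `a(0,ξ) = 0` for `ξ ≠ 0`, and the recursive
inequality coming from the Berman–Berndtsson–Sjöstrand recursion, then
`a(m, ξ) ≤ C(2m + |ξ|, |ξ|) A^m (2C)^{|ξ|}` with `A = 2^{9n+6} C^7`. -/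
theorem stmt_11 (n : ℕ) (hn : 1 ≤ n) (C : ℝ) (hC : 1 ≤ C)
    (a : ℕ → (Fin n → ℕ) → ℝ)
    (hpos : ∀ m ξ, 0 ≤ a m ξ)
    (h00 : a 0 0 = 1)
    (h0 : ∀ ξ : Fin n → ℕ, ξ ≠ 0 → a 0 ξ = 0)
    (hrec : ∀ m : ℕ, 1 ≤ m → ∀ ξ : Fin n → ℕ,
      a m ξ ≤
        ∑ l ∈ Finset.Icc 1 m,
          ∑ δ ∈ (Fintype.piFinset fun _ : Fin n => Finset.Iic l).filter
              (fun δ => ∑ i, δ i = l),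
            ∑ α ∈ Fintype.piFinset (fun i => Finset.Iic (δ i)),
              ∑ β ∈ Fintype.piFinset (fun i => Finset.Iic (δ i)),
                ∑ γ ∈ (Fintype.piFinset fun _ : Fin n =>
                      Finset.Iic (∑ i, (α i + β i))).filter
                    (fun γ => ∑ i, γ i ≤ ∑ i, (α i + β i)),
                  ∑ ξ₀ ∈ Fintype.piFinset (fun i => Finset.Iic (ξ i)),
                    a (m - l) (γ + ξ₀) *
                      (∏ i, ((γ i + ξ₀ i).choose (ξ₀ i) : ℝ)) *
                      (((2 * m + 1).choose (2 * l) : ℝ))⁻¹ *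
                      ((∏ i, ((δ i).factorial : ℝ)) / ((2 * l).factorial : ℝ)) *
                      (∏ i, ((α i + ∑ j, γ j).choose (∑ j, γ j) : ℝ)) *
                      (∏ i, ((β i + ∑ j, γ j).choose (∑ j, γ j) : ℝ)) *
                      C ^ ((∑ i, (ξ i - ξ₀ i)) + 2 * (∑ i, δ i) + (∑ i, γ i) + 1)) :
    ∀ (m : ℕ) (ξ : Fin n → ℕ),
      a m ξ ≤ ((2 * m + ∑ i, ξ i).choose (∑ i, ξ i) : ℝ) *
        (2 ^ (9 * n + 6) * C ^ 7) ^ m * (2 * C) ^ (∑ i, ξ i) :=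
  stmt_11_general n hn C hC a h00 h0 hrec
end

section
/- Let n ≥ 1 be a natural number. Define a family b : ℕ × ℕ^n → ℝ by b(0, 0) = 1, b(0, ξ) = 0 for ξ ≠ 0, and for m ≥ 1: b(m, ξ) = ∑_{l=1}^{m} ∑_{δ : |δ| = l} δ! ∑_{α ≤ δ} ∑_{β ≤ δ} ∑_{γ : |γ| ≤ |α+β|} ∑_{ξ₀ ≤ ξ} (b(m−l, γ+ξ₀)/γ!) · (ξ!/ξ₀!) · binom(α + |γ|𝟙, |γ|𝟙) · binom(β + |γ|𝟙, |γ|𝟙). Then for every m ≥ 1 and every k ∈ ℕ one has b(m, k·e₁) ≥ (2m − 2 + k)!, where e₁ = (1, 0, …, 0); in particular b(m, 0) ≥ (1/4)^m (m!)² for every m ≥ 1. -/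
/-- The optimality example of Section 6: the family `b(m, ξ)` defined by equality in
the recursive inequality (with `C = 1`) satisfies `b(m, k·e₁) ≥ (2m - 2 + k)!` for all
`m ≥ 1` and `k`; in particular `b(m, 0) ≥ (1/4)^m (m!)²` for all `m ≥ 1`. -/
theorem stmt_12 (n : ℕ) (hn : 1 ≤ n)
    (b : ℕ → (Fin n → ℕ) → ℝ)
    (h00 : b 0 0 = 1)
    (h0 : ∀ ξ : Fin n → ℕ, ξ ≠ 0 → b 0 ξ = 0)
    (hrec : ∀ m : ℕ, 1 ≤ m → ∀ ξ : Fin n → ℕ,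
      b m ξ =
        ∑ l ∈ Finset.Icc 1 m,
          ∑ δ ∈ (Fintype.piFinset fun _ : Fin n => Finset.Iic l).filter
              (fun δ => ∑ i, δ i = l),
            (∏ i, ((δ i).factorial : ℝ)) *
              ∑ α ∈ Fintype.piFinset (fun i => Finset.Iic (δ i)),
                ∑ β ∈ Fintype.piFinset (fun i => Finset.Iic (δ i)),
                  ∑ γ ∈ (Fintype.piFinset fun _ : Fin n =>
                        Finset.Iic (∑ i, (α i + β i))).filter
                      (fun γ => ∑ i, γ i ≤ ∑ i, (α i + β i)),
                    ∑ ξ₀ ∈ Fintype.piFinset (fun i => Finset.Iic (ξ i)),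
                      (b (m - l) (γ + ξ₀) / ∏ i, ((γ i).factorial : ℝ)) *
                        ((∏ i, ((ξ i).factorial : ℝ)) / (∏ i, ((ξ₀ i).factorial : ℝ))) *
                        (∏ i, ((α i + ∑ j, γ j).choose (∑ j, γ j) : ℝ)) *
                        (∏ i, ((β i + ∑ j, γ j).choose (∑ j, γ j) : ℝ))) :
    (∀ m : ℕ, 1 ≤ m → ∀ k : ℕ,
        ((2 * m - 2 + k).factorial : ℝ) ≤
          b m (fun i => if (i : ℕ) = 0 then k else 0)) ∧
      (∀ m : ℕ, 1 ≤ m → (1 / 4 : ℝ) ^ m * (m.factorial : ℝ) ^ 2 ≤ b m 0) := by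
  -- nonnegativity of a single summand, given nonnegativity of b p
  have htermnn : ∀ p : ℕ, (∀ x, 0 ≤ b p x) → ∀ (ξ γ ξ₀ α β : Fin n → ℕ),
      0 ≤ (b p (γ + ξ₀) / ∏ i, ((γ i).factorial : ℝ)) *
            ((∏ i, ((ξ i).factorial : ℝ)) / (∏ i, ((ξ₀ i).factorial : ℝ))) *
            (∏ i, ((α i + ∑ j, γ j).choose (∑ j, γ j) : ℝ)) *
            (∏ i, ((β i + ∑ j, γ j).choose (∑ j, γ j) : ℝ)) := by
    intro p hb ξ γ ξ₀ α β
    have h1 : 0 ≤ b p (γ + ξ₀) / ∏ i, ((γ i).factorial : ℝ) :=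
      div_nonneg (hb _) (by positivity)
    have h2 : 0 ≤ (∏ i, ((ξ i).factorial : ℝ)) / (∏ i, ((ξ₀ i).factorial : ℝ)) := by positivity
    have h3 : 0 ≤ (∏ i, ((α i + ∑ j, γ j).choose (∑ j, γ j) : ℝ)) := by positivity
    have h4 : 0 ≤ (∏ i, ((β i + ∑ j, γ j).choose (∑ j, γ j) : ℝ)) := by positivity
    exact mul_nonneg (mul_nonneg (mul_nonneg h1 h2) h3) h4
  have hξ₀nn : ∀ p : ℕ, (∀ x, 0 ≤ b p x) → ∀ (ξ γ α β : Fin n → ℕ),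
      0 ≤ ∑ ξ₀ ∈ Fintype.piFinset (fun i => Finset.Iic (ξ i)),
            (b p (γ + ξ₀) / ∏ i, ((γ i).factorial : ℝ)) *
              ((∏ i, ((ξ i).factorial : ℝ)) / (∏ i, ((ξ₀ i).factorial : ℝ))) *
              (∏ i, ((α i + ∑ j, γ j).choose (∑ j, γ j) : ℝ)) *
              (∏ i, ((β i + ∑ j, γ j).choose (∑ j, γ j) : ℝ)) :=
    fun p hb ξ γ α β => Finset.sum_nonneg fun ξ₀ _ => htermnn p hb ξ γ ξ₀ α β
  have hγnn : ∀ p : ℕ, (∀ x, 0 ≤ b p x) → ∀ (ξ α β : Fin n → ℕ),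
      0 ≤ ∑ γ ∈ (Fintype.piFinset fun _ : Fin n =>
              Finset.Iic (∑ i, (α i + β i))).filter
            (fun γ => ∑ i, γ i ≤ ∑ i, (α i + β i)),
          ∑ ξ₀ ∈ Fintype.piFinset (fun i => Finset.Iic (ξ i)),
            (b p (γ + ξ₀) / ∏ i, ((γ i).factorial : ℝ)) *
              ((∏ i, ((ξ i).factorial : ℝ)) / (∏ i, ((ξ₀ i).factorial : ℝ))) *
              (∏ i, ((α i + ∑ j, γ j).choose (∑ j, γ j) : ℝ)) *
              (∏ i, ((β i + ∑ j, γ j).choose (∑ j, γ j) : ℝ)) :=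
    fun p hb ξ α β => Finset.sum_nonneg fun γ _ => hξ₀nn p hb ξ γ α β
  have hαnn : ∀ p : ℕ, (∀ x, 0 ≤ b p x) → ∀ (ξ δ α : Fin n → ℕ),
      0 ≤ ∑ β ∈ Fintype.piFinset (fun i => Finset.Iic (δ i)),
          ∑ γ ∈ (Fintype.piFinset fun _ : Fin n =>
                Finset.Iic (∑ i, (α i + β i))).filter
              (fun γ => ∑ i, γ i ≤ ∑ i, (α i + β i)),
            ∑ ξ₀ ∈ Fintype.piFinset (fun i => Finset.Iic (ξ i)),
              (b p (γ + ξ₀) / ∏ i, ((γ i).factorial : ℝ)) *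
                ((∏ i, ((ξ i).factorial : ℝ)) / (∏ i, ((ξ₀ i).factorial : ℝ))) *
                (∏ i, ((α i + ∑ j, γ j).choose (∑ j, γ j) : ℝ)) *
                (∏ i, ((β i + ∑ j, γ j).choose (∑ j, γ j) : ℝ)) :=
    fun p hb ξ δ α => Finset.sum_nonneg fun β _ => hγnn p hb ξ α β
  have hδnn : ∀ p : ℕ, (∀ x, 0 ≤ b p x) → ∀ (ξ δ : Fin n → ℕ),
      0 ≤ (∏ i, ((δ i).factorial : ℝ)) *
          ∑ α ∈ Fintype.piFinset (fun i => Finset.Iic (δ i)),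
            ∑ β ∈ Fintype.piFinset (fun i => Finset.Iic (δ i)),
              ∑ γ ∈ (Fintype.piFinset fun _ : Fin n =>
                    Finset.Iic (∑ i, (α i + β i))).filter
                  (fun γ => ∑ i, γ i ≤ ∑ i, (α i + β i)),
                ∑ ξ₀ ∈ Fintype.piFinset (fun i => Finset.Iic (ξ i)),
                  (b p (γ + ξ₀) / ∏ i, ((γ i).factorial : ℝ)) *
                    ((∏ i, ((ξ i).factorial : ℝ)) / (∏ i, ((ξ₀ i).factorial : ℝ))) *
                    (∏ i, ((α i + ∑ j, γ j).choose (∑ j, γ j) : ℝ)) *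
                    (∏ i, ((β i + ∑ j, γ j).choose (∑ j, γ j) : ℝ)) :=
    fun p hb ξ δ => mul_nonneg (by positivity)
      (Finset.sum_nonneg fun α _ => hαnn p hb ξ δ α)
  have hlnn : ∀ (p l : ℕ), (∀ x, 0 ≤ b p x) → ∀ (ξ : Fin n → ℕ),
      0 ≤ ∑ δ ∈ (Fintype.piFinset fun _ : Fin n => Finset.Iic l).filter
              (fun δ => ∑ i, δ i = l),
            (∏ i, ((δ i).factorial : ℝ)) *
              ∑ α ∈ Fintype.piFinset (fun i => Finset.Iic (δ i)),
                ∑ β ∈ Fintype.piFinset (fun i => Finset.Iic (δ i)),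
                  ∑ γ ∈ (Fintype.piFinset fun _ : Fin n =>
                        Finset.Iic (∑ i, (α i + β i))).filter
                      (fun γ => ∑ i, γ i ≤ ∑ i, (α i + β i)),
                    ∑ ξ₀ ∈ Fintype.piFinset (fun i => Finset.Iic (ξ i)),
                      (b p (γ + ξ₀) / ∏ i, ((γ i).factorial : ℝ)) *
                        ((∏ i, ((ξ i).factorial : ℝ)) / (∏ i, ((ξ₀ i).factorial : ℝ))) *
                        (∏ i, ((α i + ∑ j, γ j).choose (∑ j, γ j) : ℝ)) *
                        (∏ i, ((β i + ∑ j, γ j).choose (∑ j, γ j) : ℝ)) :=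
    fun p l hb ξ => Finset.sum_nonneg fun δ _ => hδnn p hb ξ δ
  -- b is nonnegative everywhere
  have hall : ∀ m : ℕ, ∀ x, 0 ≤ b m x := by
    intro m
    induction m using Nat.strong_induction_on with
    | _ m ih =>
      intro x
      rcases Nat.eq_zero_or_pos m with rfl | hm
      · rcases eq_or_ne x 0 with rfl | hx
        · rw [h00]; norm_num
        · rw [h0 x hx]
      · rw [hrec m hm x]
        refine Finset.sum_nonneg fun l hl => ?_
        have hl' := Finset.mem_Icc.mp hl
        exact hlnn (m - l) l (ih (m - l) (by omega)) x
  -- helper: products / sums over the "e c" vectors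
  have hsumE : ∀ c : ℕ, (∑ i : Fin n, (if (i : ℕ) = 0 then c else 0)) = c := by
    intro c
    rw [Finset.sum_eq_single (⟨0, hn⟩ : Fin n)]
    · simp
    · intro j _ hj
      have : (j : ℕ) ≠ 0 := fun h => hj (Fin.ext h)
      rw [if_neg this]
    · exact fun h => absurd (Finset.mem_univ _) h
  have hprodE : ∀ (f : ℕ → ℝ), f 0 = 1 → ∀ c : ℕ,
      (∏ i : Fin n, f (if (i : ℕ) = 0 then c else 0)) = f c := by
    intro f hf c
    rw [Finset.prod_eq_single (⟨0, hn⟩ : Fin n)]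
    · simp
    · intro j _ hj
      have : (j : ℕ) ≠ 0 := fun h => hj (Fin.ext h)
      rw [if_neg this, hf]
    · exact fun h => absurd (Finset.mem_univ _) h
  have hfacE : ∀ c : ℕ,
      (∏ i : Fin n, (((if (i : ℕ) = 0 then c else 0) : ℕ).factorial : ℝ)) = (c.factorial : ℝ) :=
    fun c => hprodE (fun t => (t.factorial : ℝ)) (by norm_num) c
  have hchE : ∀ c : ℕ,
      (∏ i : Fin n, ((((if (i : ℕ) = 0 then c else 0) : ℕ) + 2).choose 2 : ℝ)) =
        ((c + 2).choose 2 : ℝ) :=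
    fun c => hprodE (fun t => ((t + 2).choose 2 : ℝ)) (by norm_num) c
  have hmemE : ∀ c d : ℕ, c ≤ d →
      (fun i : Fin n => if (i : ℕ) = 0 then c else 0) ∈
        Fintype.piFinset (fun _ : Fin n => Finset.Iic d) := by
    intro c d hcd
    refine Fintype.mem_piFinset.mpr fun i => Finset.mem_Iic.mpr ?_
    split <;> omega
  -- base case: b 1 ξ ≥ ∏ ξ_i!
  have hbase : ∀ ξ : Fin n → ℕ, (∏ i, ((ξ i).factorial : ℝ)) ≤ b 1 ξ := by
    intro ξ
    rw [hrec 1 le_rfl ξ]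
    refine le_trans ?_ (Finset.single_le_sum
      (fun l hl => hlnn (1 - l) l (hall _) ξ)
      (show (1 : ℕ) ∈ Finset.Icc 1 1 from Finset.mem_Icc.mpr ⟨le_rfl, le_rfl⟩))
    refine le_trans ?_ (Finset.single_le_sum
      (fun δ hδ => hδnn (1 - 1) (hall _) ξ δ)
      (show (fun i : Fin n => if (i : ℕ) = 0 then 1 else 0) ∈ _ from
        Finset.mem_filter.mpr ⟨hmemE 1 1 le_rfl, hsumE 1⟩))
    refine le_trans ?_ (mul_le_mul_of_nonneg_left (Finset.single_le_sum
      (fun α hα => hαnn (1 - 1) (hall _) ξ _ α)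
      (show (0 : Fin n → ℕ) ∈ _ from Fintype.mem_piFinset.mpr fun i => Finset.mem_Iic.mpr (Nat.zero_le _)))
      (by positivity))
    refine le_trans ?_ (mul_le_mul_of_nonneg_left (Finset.single_le_sum
      (fun β hβ => hγnn (1 - 1) (hall _) ξ _ β)
      (show (0 : Fin n → ℕ) ∈ _ from Fintype.mem_piFinset.mpr fun i => Finset.mem_Iic.mpr (Nat.zero_le _)))
      (by positivity))
    refine le_trans ?_ (mul_le_mul_of_nonneg_left (Finset.single_le_sum
      (fun γ hγ => hξ₀nn (1 - 1) (hall _) ξ γ _ _)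
      (show (0 : Fin n → ℕ) ∈ _ from Finset.mem_filter.mpr
        ⟨Fintype.mem_piFinset.mpr fun i => Finset.mem_Iic.mpr (Nat.zero_le _), by simp⟩))
      (by positivity))
    refine le_trans ?_ (mul_le_mul_of_nonneg_left (Finset.single_le_sum
      (fun ξ₀ hξ₀ => htermnn (1 - 1) (hall _) ξ _ ξ₀ _ _)
      (show (0 : Fin n → ℕ) ∈ _ from Fintype.mem_piFinset.mpr fun i => Finset.mem_Iic.mpr (Nat.zero_le _)))
      (by positivity))
    simp [h00, hfacE]
  -- step: b (j+1) ξ ≥ b j (2e₁ + ξ)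
  have hstep : ∀ (j : ℕ) (ξ : Fin n → ℕ),
      b j ((fun i : Fin n => if (i : ℕ) = 0 then 2 else 0) + ξ) ≤ b (j + 1) ξ := by
    intro j ξ
    rw [hrec (j + 1) (Nat.le_add_left 1 j) ξ]
    refine le_trans ?_ (Finset.single_le_sum
      (fun l hl => hlnn (j + 1 - l) l (hall _) ξ)
      (show (1 : ℕ) ∈ Finset.Icc 1 (j + 1) from Finset.mem_Icc.mpr ⟨le_rfl, by omega⟩))
    refine le_trans ?_ (Finset.single_le_sum
      (fun δ hδ => hδnn (j + 1 - 1) (hall _) ξ δ)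
      (show (fun i : Fin n => if (i : ℕ) = 0 then 1 else 0) ∈ _ from
        Finset.mem_filter.mpr ⟨hmemE 1 1 le_rfl, hsumE 1⟩))
    refine le_trans ?_ (mul_le_mul_of_nonneg_left (Finset.single_le_sum
      (fun α hα => hαnn (j + 1 - 1) (hall _) ξ _ α)
      (show (fun i : Fin n => if (i : ℕ) = 0 then 1 else 0) ∈ _ from
        Fintype.mem_piFinset.mpr fun i => Finset.mem_Iic.mpr le_rfl))
      (by positivity))
    refine le_trans ?_ (mul_le_mul_of_nonneg_left (Finset.single_le_sum
      (fun β hβ => hγnn (j + 1 - 1) (hall _) ξ _ β)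
      (show (fun i : Fin n => if (i : ℕ) = 0 then 1 else 0) ∈ _ from
        Fintype.mem_piFinset.mpr fun i => Finset.mem_Iic.mpr le_rfl))
      (by positivity))
    have hsum2 : (∑ i : Fin n,
        ((if (i : ℕ) = 0 then 1 else 0) + (if (i : ℕ) = 0 then 1 else 0))) = 2 := by
      have : ∀ i : Fin n,
          ((if (i : ℕ) = 0 then 1 else 0) + (if (i : ℕ) = 0 then 1 else 0))
            = (if (i : ℕ) = 0 then 2 else 0) := by intro i; split <;> rfl
      rw [Finset.sum_congr rfl fun i _ => this i, hsumE 2]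
    refine le_trans ?_ (mul_le_mul_of_nonneg_left (Finset.single_le_sum
      (fun γ hγ => hξ₀nn (j + 1 - 1) (hall _) ξ γ _ _)
      (show (fun i : Fin n => if (i : ℕ) = 0 then 2 else 0) ∈ _ from
        Finset.mem_filter.mpr ⟨by
          refine Fintype.mem_piFinset.mpr fun i => Finset.mem_Iic.mpr ?_
          rw [hsum2]; split <;> omega,
          by rw [hsum2, hsumE 2]⟩))
      (by positivity))
    refine le_trans ?_ (mul_le_mul_of_nonneg_left (Finset.single_le_sum
      (fun ξ₀ hξ₀ => htermnn (j + 1 - 1) (hall _) ξ _ ξ₀ _ _)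
      (show ξ ∈ _ from Fintype.mem_piFinset.mpr fun i => Finset.mem_Iic.mpr le_rfl))
      (by positivity))
    -- now compute the chosen term
    have hP : (∏ i, ((ξ i).factorial : ℝ)) ≠ 0 :=
      ne_of_gt (Finset.prod_pos fun i _ => by exact_mod_cast (ξ i).factorial_pos)
    have hj1 : j + 1 - 1 = j := rfl
    simp only [hj1, hsumE 2, hfacE 1, hfacE 2, div_self hP]
    have hch : (∏ i : Fin n, (((if (i : ℕ) = 0 then 1 else 0) + 2).choose 2 : ℝ)) = 3 := by
      rw [hchE 1]; norm_num
    rw [hch]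
    have hb := hall j ((fun i : Fin n => if (i : ℕ) = 0 then 2 else 0) + ξ)
    norm_num [Nat.factorial]
    nlinarith [hb]
  -- main estimate: b (j+1) (k e₁) ≥ (2j+k)!
  have hmain : ∀ j k : ℕ,
      ((2 * j + k).factorial : ℝ) ≤ b (j + 1) (fun i : Fin n => if (i : ℕ) = 0 then k else 0) := by
    intro j
    induction j with
    | zero =>
      intro k
      have h := hbase (fun i : Fin n => if (i : ℕ) = 0 then k else 0)
      rw [hfacE k] at h
      simpa using h
    | succ j ih =>
      intro k
      have hEadd : ((fun i : Fin n => if (i : ℕ) = 0 then 2 else 0) +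
          fun i : Fin n => if (i : ℕ) = 0 then k else 0) =
          (fun i : Fin n => if (i : ℕ) = 0 then (k + 2) else 0) := by
        funext i
        simp only [Pi.add_apply]
        split <;> omega
      have h1 := hstep (j + 1) (fun i : Fin n => if (i : ℕ) = 0 then k else 0)
      rw [hEadd] at h1
      have h2 := ih (k + 2)
      have h3 : 2 * j + (k + 2) = 2 * (j + 1) + k := by ring
      rw [h3] at h2
      exact le_trans h2 h1
  constructor
  · intro m hm k
    obtain ⟨j, rfl⟩ : ∃ j, m = j + 1 := ⟨m - 1, by omega⟩
    have : 2 * (j + 1) - 2 + k = 2 * j + k := by omega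
    rw [this]
    exact hmain j k
  · intro m hm
    obtain ⟨j, rfl⟩ : ∃ j, m = j + 1 := ⟨m - 1, by omega⟩
    have h1 := hmain j 0
    have hz : (fun i : Fin n => if (i : ℕ) = 0 then 0 else 0) = (0 : Fin n → ℕ) := by
      funext i; split <;> rfl
    rw [hz, Nat.add_zero] at h1
    refine le_trans ?_ h1
    -- arithmetic: (1/4)^(j+1) * ((j+1)!)^2 ≤ (2j)!
    clear h1 hz hm
    induction j with
    | zero => norm_num [Nat.factorial]
    | succ j ih =>
      have e1 : (j + 1 + 1).factorial = (j + 2) * (j + 1).factorial := rfl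
      have e2 : 2 * (j + 1) = 2 * j + 1 + 1 := by ring
      rw [e2]
      have e3 : (2 * j + 1 + 1).factorial = (2 * j + 2) * ((2 * j + 1) * (2 * j).factorial) := by
        rw [Nat.factorial_succ, Nat.factorial_succ]
      rw [e1, e3]
      push_cast
      rw [pow_succ]
      have hG : (0 : ℝ) ≤ ((2 * j).factorial : ℝ) := by positivity
      have key : (((j : ℝ) + 2) ^ 2) / 4 ≤ (2 * (j : ℝ) + 2) * (2 * (j : ℝ) + 1) := by
        nlinarith [sq_nonneg ((j : ℝ)), (Nat.cast_nonneg j : (0:ℝ) ≤ j)]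
      calc (1 / 4 : ℝ) ^ (j + 1) * (1 / 4) * (((j : ℝ) + 2) * ((j + 1).factorial : ℝ)) ^ 2
          = ((1 / 4 : ℝ) ^ (j + 1) * ((j + 1).factorial : ℝ) ^ 2) * ((((j : ℝ) + 2) ^ 2) / 4) := by
            ring
        _ ≤ ((2 * j).factorial : ℝ) * ((((j : ℝ) + 2) ^ 2) / 4) :=
            mul_le_mul_of_nonneg_right ih (by positivity)
        _ ≤ ((2 * j).factorial : ℝ) * ((2 * (j : ℝ) + 2) * (2 * (j : ℝ) + 1)) :=
            mul_le_mul_of_nonneg_left key hG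
        _ = (2 * (j : ℝ) + 2) * ((2 * (j : ℝ) + 1) * ((2 * j).factorial : ℝ)) := by ring
end

section
/- Let n ≥ 1 be a natural number and c a real number. Let a_l ∈ ℚ (l ∈ ℕ) be the coefficients of the formal power series e^x · ((e^x − 1)/x)^{n−1} = ∑_{l≥0} a_l x^l, where (e^x − 1)/x denotes the power series ∑_{l≥0} x^l/(l+1)!. Define a sequence (b_m)_{m≥0} of real numbers by b_0 = 1 and, for m ≥ 1, b_m = − ∑_{l=1}^{m} (−c)^l · ((l+n−1)!/(n−1)!) · a_l · b_{m−l}. Then b_m = 0 for every m > n, and for every real number X one has ∑_{j=0}^{n} b_j X^{n−j} = ∏_{i=1}^{n} (X + i c). -/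
/-!
With `E = exp - 1` and `k = n - 1`, the series `∑ aₗ x^(l+k)` is `eˣ Eᵏ`, and the recursion says
that `∑ bₘ xᵐ` is the inverse of `U(x) = ∑ (-c)ˡ ((l+k)!/k!) aₗ xˡ`. Up to the substitution
`x ↦ -c x` and the factor `k! xᵏ`, `U` is the formal Laplace transform
`L : ∑ fₘ xᵐ ↦ ∑ m! fₘ xᵐ` of `eˣ Eᵏ`. The transform turns differentiation into division by `x`,
and `(E^(k+1))' = (k+1) eˣ Eᵏ` with `eˣ Eᵏ = E^(k+1) + Eᵏ`; this gives
`L(E^(k+1)) = (k+1) x L(eˣ Eᵏ)` and `(1 - (k+1)x) L(eˣ Eᵏ) = L(Eᵏ)`, whence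
`L(eˣ Eᵏ) ∏_{i=1}^{k+1} (1 - i x) = k! xᵏ`. So `∑ bₘ xᵐ = ∏_{i=1}^n (1 + i c x)`, a polynomial
of degree at most `n` whose reversal is `∏_{i=1}^n (X + i c)`.
-/

open scoped Classical

/-- The coefficients `a_l ∈ ℚ` of the formal power series
`e^x ((e^x - 1)/x)^(n-1)`, where `(e^x - 1)/x = ∑_{l≥0} x^l/(l+1)!`. -/
noncomputable def aCoeff (n l : ℕ) : ℚ :=
  PowerSeries.coeff (R := ℚ) l
    (PowerSeries.exp ℚ *
      (PowerSeries.mk fun j => (1 : ℚ) / ((j + 1).factorial : ℚ)) ^ (n - 1))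

open PowerSeries
open scoped Nat

namespace PowerSeries

section Laplace

variable {R : Type*} [CommSemiring R]

noncomputable def laplace : R⟦X⟧ →ₗ[R] R⟦X⟧ where
  toFun f := mk fun m => m ! * coeff m f
  map_add' f g := by ext; simp [mul_add]
  map_smul' r f := by ext; simp [mul_left_comm]

@[simp]
theorem coeff_laplace (f : R⟦X⟧) (m : ℕ) : coeff m (laplace f) = m ! * coeff m f := by
  simp [laplace]

@[simp]
theorem laplace_one : laplace (1 : R⟦X⟧) = 1 := by
  ext m
  rcases m with _ | m <;> simp [coeff_one]

theorem X_mul_laplace_derivative_add (f : R⟦X⟧) :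
    X * laplace (d⁄dX R f) + C (constantCoeff f) = laplace f := by
  ext m
  rcases m with _ | m
  · simp
  · simp only [map_add, coeff_succ_X_mul, coeff_laplace, coeff_derivative, coeff_succ_C, add_zero,
      Nat.factorial_succ, Nat.cast_mul, Nat.cast_add, Nat.cast_one]
    ring

theorem laplace_X_pow_mul (k : ℕ) (f : R⟦X⟧) :
    laplace (X ^ k * f) = X ^ k * mk fun l => ((l + k) ! : R) * coeff l f := by
  ext m
  rcases le_or_gt k m with h | h
  · obtain ⟨l, rfl⟩ := Nat.exists_eq_add_of_le' h
    simp [coeff_X_pow_mul]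
  · simp [coeff_X_pow_mul', h.not_ge]

end Laplace

section Exp

variable (A : Type*) [CommRing A] [Algebra ℚ A]

theorem derivative_exp_sub_one_pow_succ (k : ℕ) :
    d⁄dX A ((exp A - 1) ^ (k + 1)) = (k + 1) • (exp A * (exp A - 1) ^ k) := by
  rw [derivative_pow, map_sub, derivative_exp, derivative_one, nsmul_eq_mul]
  push_cast
  ring

theorem laplace_exp_sub_one_pow_succ (k : ℕ) :
    laplace ((exp A - 1) ^ (k + 1)) =
      (k + 1 : A⟦X⟧) * X * laplace (exp A * (exp A - 1) ^ k) := by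
  have h := X_mul_laplace_derivative_add ((exp A - 1) ^ (k + 1))
  simp only [derivative_exp_sub_one_pow_succ, map_pow, map_sub, constantCoeff_exp, map_one,
    sub_self, zero_pow k.succ_ne_zero, map_zero, add_zero] at h
  rw [← h, map_nsmul, nsmul_eq_mul]
  push_cast
  ring

theorem one_sub_mul_laplace_exp_mul_exp_sub_one_pow (k : ℕ) :
    (1 - (k + 1 : A⟦X⟧) * X) * laplace (exp A * (exp A - 1) ^ k) =
      laplace ((exp A - 1) ^ k) := by
  have h : exp A * (exp A - 1) ^ k = (exp A - 1) ^ (k + 1) + (exp A - 1) ^ k := by ring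
  rw [sub_mul, ← laplace_exp_sub_one_pow_succ, h, map_add]
  ring

theorem laplace_exp_sub_one_pow_mul_prod (k : ℕ) :
    laplace ((exp A - 1) ^ k) * ∏ i ∈ Finset.Icc 1 k, (1 - (i : A⟦X⟧) * X) =
      (k ! : A⟦X⟧) * X ^ k := by
  induction k with
  | zero => simp
  | succ k ih =>
    rw [Finset.prod_Icc_succ_top (by omega), laplace_exp_sub_one_pow_succ, Nat.factorial_succ]
    calc _ = (k + 1 : A⟦X⟧) * X *
          (laplace ((exp A - 1) ^ k) * ∏ i ∈ Finset.Icc 1 k, (1 - (i : A⟦X⟧) * X)) := by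
          rw [← one_sub_mul_laplace_exp_mul_exp_sub_one_pow]
          push_cast
          ring
      _ = _ := by
          rw [ih]
          push_cast
          ring

theorem laplace_exp_mul_exp_sub_one_pow_mul_prod (k : ℕ) :
    laplace (exp A * (exp A - 1) ^ k) * ∏ i ∈ Finset.Icc 1 (k + 1), (1 - (i : A⟦X⟧) * X) =
      (k ! : A⟦X⟧) * X ^ k := by
  rw [Finset.prod_Icc_succ_top (by omega), ← laplace_exp_sub_one_pow_mul_prod,
    ← one_sub_mul_laplace_exp_mul_exp_sub_one_pow]
  push_cast
  ring

end Exp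

theorem X_mul_mk_inv_factorial_succ :
    X * mk (fun j => (1 : ℚ) / ((j + 1)! : ℚ)) = exp ℚ - 1 := by
  ext m
  rcases m with _ | m <;> simp [coeff_succ_X_mul, coeff_exp]

theorem mk_mul_mk_eq_one_of_rec {R : Type*} [Ring R] {u b : ℕ → R} (hu : u 0 = 1)
    (hb0 : b 0 = 1) (hrec : ∀ m, 1 ≤ m → b m = -∑ l ∈ Finset.Icc 1 m, u l * b (m - l)) :
    mk u * mk b = 1 := by
  ext m
  rw [coeff_mul, Finset.Nat.sum_antidiagonal_eq_sum_range_succ_mk, coeff_one]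
  rcases m with _ | m
  · simp [hu, hb0]
  · simp only [coeff_mk, if_neg m.succ_ne_zero]
    rw [Finset.range_eq_Ico, Finset.sum_eq_sum_Ico_succ_bot (by omega), Nat.succ_eq_add_one,
      Finset.Ico_add_one_right_eq_Icc, hu, one_mul, Nat.sub_zero, hrec (m + 1) (by omega), zero_add,
      neg_add_cancel]

end PowerSeries

namespace Polynomial

section Semiring

variable {R : Type*} [Semiring R]

theorem natDegree_one_add_C_mul_X_le (a : R) : (1 + C a * X).natDegree ≤ 1 :=
  (natDegree_add_le _ _).trans (max_le (by simp) ((natDegree_C_mul_le _ _).trans natDegree_X_le))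

theorem eval_reflect (f : R[X]) {N : ℕ} (h : f.natDegree ≤ N) (x : R) :
    eval x (reflect N f) = ∑ j ∈ Finset.range (N + 1), f.coeff j * x ^ (N - j) := by
  rw [eval_eq_sum_range' (n := N + 1) (natDegree_reflect_le.trans_lt (by omega)),
    ← Finset.sum_range_reflect]
  refine Finset.sum_congr rfl fun j hj => ?_
  have hj : j ≤ N := Nat.lt_succ_iff.mp (Finset.mem_range.mp hj)
  rw [coeff_reflect, revAt_le (by omega), Nat.add_sub_cancel, Nat.sub_sub_self hj]

end Semiring

section CommSemiring

variable {R : Type*} [CommSemiring R]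

theorem reflect_prod {ι : Type*} (s : Finset ι) (f : ι → R[X]) (N : ι → ℕ)
    (h : ∀ i ∈ s, (f i).natDegree ≤ N i) :
    reflect (∑ i ∈ s, N i) (∏ i ∈ s, f i) = ∏ i ∈ s, reflect (N i) (f i) := by
  classical
  induction s using Finset.induction_on with
  | empty => simp [reflect_one]
  | insert i s hi ih =>
    rw [Finset.sum_insert hi, Finset.prod_insert hi, Finset.prod_insert hi,
      reflect_mul _ _ (h i (by simp))
        ((natDegree_prod_le _ _).trans (Finset.sum_le_sum fun j hj => h j (by simp [hj]))),
      ih fun j hj => h j (by simp [hj])]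

theorem natDegree_prod_one_add_C_mul_X_le {ι : Type*} (s : Finset ι) (a : ι → R) :
    (∏ i ∈ s, (1 + C (a i) * X)).natDegree ≤ s.card := by
  refine (natDegree_prod_le _ _).trans ?_
  simpa using Finset.sum_le_card_nsmul s _ 1 fun i _ => natDegree_one_add_C_mul_X_le (a i)

theorem reflect_prod_one_add_C_mul_X {ι : Type*} (s : Finset ι) (a : ι → R) :
    reflect s.card (∏ i ∈ s, (1 + C (a i) * X)) = ∏ i ∈ s, (X + C (a i)) := by
  rw [Finset.card_eq_sum_ones, reflect_prod _ _ _ fun i _ => natDegree_one_add_C_mul_X_le (a i)]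
  simp [reflect_add, reflect_one, reflect_C_mul]

end CommSemiring

end Polynomial

theorem aCoeff_zero (n : ℕ) : aCoeff n 0 = 1 := by
  simp [aCoeff, coeff_zero_eq_constantCoeff]

theorem exp_mul_exp_sub_one_pow_eq_X_pow_mul_mk_aCoeff (k : ℕ) :
    exp ℚ * (exp ℚ - 1) ^ k = X ^ k * mk (aCoeff (k + 1)) := by
  have h : mk (aCoeff (k + 1)) = exp ℚ * (mk fun j => (1 : ℚ) / ((j + 1)! : ℚ)) ^ k := by
    ext l
    simp [aCoeff]
  rw [h, ← X_mul_mk_inv_factorial_succ]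
  ring

theorem mk_factorial_mul_aCoeff_mul_prod (k : ℕ) :
    (mk fun l => ((l + k)! : ℚ) * aCoeff (k + 1) l) *
      ∏ i ∈ Finset.Icc 1 (k + 1), (1 - (i : ℚ⟦X⟧) * X) = (k ! : ℚ⟦X⟧) := by
  have h := laplace_X_pow_mul k (mk (aCoeff (k + 1)))
  simp only [coeff_mk] at h
  apply X_pow_mul_cancel (k := k)
  rw [← mul_assoc, ← h, ← exp_mul_exp_sub_one_pow_eq_X_pow_mul_mk_aCoeff,
    laplace_exp_mul_exp_sub_one_pow_mul_prod]
  ring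

theorem mk_aCoeff_mul_prod_one_add (k : ℕ) (c : ℝ) :
    (mk fun l => (-c) ^ l * (((l + k)! : ℝ) / (k ! : ℝ)) * (aCoeff (k + 1) l : ℝ)) *
      ∏ i ∈ Finset.Icc 1 (k + 1), (1 + C ((i : ℝ) * c) * X) = 1 := by
  have h := congrArg (fun f => C (k ! : ℝ)⁻¹ * rescale (-c) (map (algebraMap ℚ ℝ) f))
    (mk_factorial_mul_aCoeff_mul_prod k)
  simp only [map_mul, map_prod, map_sub, map_one, map_natCast, map_X, rescale_X] at h
  have hU :
      (mk fun l => (-c) ^ l * (((l + k)! : ℝ) / (k ! : ℝ)) * (aCoeff (k + 1) l : ℝ)) =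
      C (k ! : ℝ)⁻¹ *
        rescale (-c) (map (algebraMap ℚ ℝ) (mk fun l => ((l + k)! : ℚ) * aCoeff (k + 1) l)) := by
    ext l
    simp only [coeff_mk, coeff_C_mul, coeff_rescale, coeff_map, eq_ratCast, Rat.cast_mul,
      Rat.cast_natCast]
    ring
  have hP (i : ℕ) : 1 + C ((i : ℝ) * c) * X = 1 - (i : ℝ⟦X⟧) * (C (-c) * X) := by
    simp only [map_mul, map_neg, map_natCast]
    ring
  have hk : C (k ! : ℝ)⁻¹ * (k ! : ℝ⟦X⟧) = 1 := by
    rw [← map_natCast C, ← map_mul, inv_mul_cancel₀ (by positivity), map_one]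
  rw [hU, Finset.prod_congr rfl fun i _ => hP i, mul_assoc, h, hk]

/-- Lemma 7.2 / Proposition 7.1 (algebraic content): if `b₀ = 1` and
`b_m = -∑_{l=1}^m (-c)^l ((l+n-1)!/(n-1)!) a_l b_{m-l}` for `m ≥ 1`, then `b_m = 0` for
`m > n` and `∑_{j=0}^n b_j X^{n-j} = ∏_{i=1}^n (X + i c)` for every real `X`. -/
theorem stmt_13 (n : ℕ) (hn : 1 ≤ n) (c : ℝ) (b : ℕ → ℝ)
    (hb0 : b 0 = 1)
    (hrec : ∀ m : ℕ, 1 ≤ m →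
      b m = -∑ l ∈ Finset.Icc 1 m,
        (-c) ^ l * (((l + n - 1).factorial : ℝ) / ((n - 1).factorial : ℝ)) *
          (aCoeff n l : ℝ) * b (m - l)) :
    (∀ m : ℕ, n < m → b m = 0) ∧
      ∀ X : ℝ, ∑ j ∈ Finset.range (n + 1), b j * X ^ (n - j) =
        ∏ i ∈ Finset.Icc 1 n, (X + (i : ℝ) * c) := by
  obtain ⟨k, rfl⟩ : ∃ k, n = k + 1 := ⟨n - 1, by omega⟩
  set U : ℝ⟦X⟧ := mk fun l => (-c) ^ l * (((l + k)! : ℝ) / (k ! : ℝ)) * (aCoeff (k + 1) l : ℝ)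
  set P : Polynomial ℝ :=
    ∏ i ∈ Finset.Icc 1 (k + 1), (1 + Polynomial.C ((i : ℝ) * c) * Polynomial.X)
  have hUb : U * mk b = 1 :=
    mk_mul_mk_eq_one_of_rec (by simp [aCoeff_zero, Nat.factorial_ne_zero]) hb0
      (by simpa using hrec)
  have hbP : mk b = (P : ℝ⟦X⟧) := by
    rw [← Polynomial.coeToPowerSeries.ringHom_apply, map_prod]
    simp only [Polynomial.coeToPowerSeries.ringHom_apply, Polynomial.coe_add, Polynomial.coe_one,
      Polynomial.coe_mul, Polynomial.coe_C, Polynomial.coe_X]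
    exact left_inv_eq_right_inv (mul_comm U _ ▸ hUb) (mk_aCoeff_mul_prod_one_add k c)
  have hb (m : ℕ) : b m = P.coeff m := by simpa using congrArg (coeff m) hbP
  have hdeg : P.natDegree ≤ k + 1 :=
    (Polynomial.natDegree_prod_one_add_C_mul_X_le _ _).trans (by simp)
  refine ⟨fun m hm => by rw [hb, Polynomial.coeff_eq_zero_of_natDegree_lt (hdeg.trans_lt hm)],
    fun x => ?_⟩
  have hreflect : Polynomial.reflect (k + 1) P =
      ∏ i ∈ Finset.Icc 1 (k + 1), (Polynomial.X + Polynomial.C ((i : ℝ) * c)) := by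
    have h := Polynomial.reflect_prod_one_add_C_mul_X (Finset.Icc 1 (k + 1)) fun i => (i : ℝ) * c
    rwa [Nat.card_Icc, Nat.add_sub_cancel] at h
  simp [hb, ← Polynomial.eval_reflect P hdeg, hreflect, Polynomial.eval_prod]
end

section
/- Let n ≥ 1 and let ψ : ℂ^n × ℂ^n → ℂ be holomorphic (jointly complex analytic) on a product neighborhood W × W of (0,0) in ℂ^n × ℂ^n, such that ψ(x, conj(x)) is real for every x ∈ W, and such that the Hermitian matrix H with entries H_{ij} = (∂_{x_i} ∂_{z_j} ψ)(0, 0) is positive definite. Define φ(x) = ψ(x, conj(x)) and the diastasis D(x, y) = φ(x) + φ(y) − 2 Re ψ(x, conj(y)). Then there exist a real δ > 0 and a radius r > 0 such that for all x, y in the ball B(0, r) ⊂ ℂ^n: δ ‖x − y‖² ≤ D(x, y) ≤ δ^{−1} ‖x − y‖². In particular, 2 Re ψ(x, conj(y)) ≤ φ(x) + φ(y) − δ ‖x − y‖² for all x, y ∈ B(0, r). -/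
/-!
Write `f (x, z) = ψ x z`. Since `f` is real on the totally real diagonal `{(x, conj x)}`, the
one-variable identity theorem on complex lines through it gives the reflection identity
`ψ y (conj x) = conj (ψ x (conj y))`. Hence `D(x, y)` is the real part of the second difference
`f(x, x̄) - f(y, x̄) - f(x, ȳ) + f(y, ȳ)`, which by the mean value inequality applied twice is
`H(x - y, conj (x - y))` up to `o(‖x - y‖²)`, where `H` is the mixed Hessian `∂ₓ∂_z f(0, 0)`.
Positive definiteness of `H` and compactness of the unit sphere make this quadratic term
comparable with `‖x - y‖²`.
-/

open scoped ComplexOrder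

/-- Coordinatewise complex conjugation on `ℂ^n`. -/
noncomputable def conjVec {n : ℕ} (x : Fin n → ℂ) : Fin n → ℂ :=
  fun i => starRingEnd ℂ (x i)

/-- The local Kähler potential `φ(x) = ψ(x, conj x)` (real part). -/
noncomputable def potential {n : ℕ} (ψ : (Fin n → ℂ) → (Fin n → ℂ) → ℂ)
    (x : Fin n → ℂ) : ℝ :=
  (ψ x (conjVec x)).re

/-- Calabi's diastasis `D(x,y) = φ(x) + φ(y) - 2 Re ψ(x, conj y)`. -/
noncomputable def diastasis {n : ℕ} (ψ : (Fin n → ℂ) → (Fin n → ℂ) → ℂ)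
    (x y : Fin n → ℂ) : ℝ :=
  potential ψ x + potential ψ y - 2 * (ψ x (conjVec y)).re

open Metric Filter Topology ComplexConjugate
open scoped Matrix

section SecondDifference

variable {𝕜 : Type*} [RCLike 𝕜] {E G : Type*} [NormedAddCommGroup E] [NormedSpace ℝ E]
  [NormedSpace 𝕜 E] [NormedAddCommGroup G] [NormedSpace 𝕜 G]

theorem Convex.norm_second_difference_sub_le {f : E → G} {B : E →L[𝕜] E →L[𝕜] G} {s : Set E}
    {ε : ℝ} (hs : Convex ℝ s) (hf : ∀ w ∈ s, DifferentiableAt 𝕜 f w)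
    (hf' : ∀ w ∈ s, DifferentiableAt 𝕜 (fderiv 𝕜 f) w)
    (hB : ∀ w ∈ s, ‖fderiv 𝕜 (fderiv 𝕜 f) w - B‖ ≤ ε) {a c d : E} (ha : a ∈ s)
    (hac : a + c ∈ s) (had : a + d ∈ s) (hacd : a + c + d ∈ s) :
    ‖f (a + c + d) - f (a + d) - (f (a + c) - f a) - B c d‖ ≤ ε * ‖c‖ * ‖d‖ := by
  have hderiv_increment : ∀ w ∈ s, w + c ∈ s → ‖fderiv 𝕜 f (w + c) - fderiv 𝕜 f w - B c‖ ≤ ε * ‖c‖ := by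
    intro w hw hwc
    simpa using hs.norm_image_sub_le_of_norm_fderiv_le' hf' hB hw hwc
  have hk : ∀ w ∈ s ∩ (· + c) ⁻¹' s, HasFDerivWithinAt (fun w => f (w + c) - f w)
      (fderiv 𝕜 f (w + c) - fderiv 𝕜 f w) (s ∩ (· + c) ⁻¹' s) w := fun w hw =>
    (((hasFDerivAt_comp_add_right c).2 (hf _ hw.2).hasFDerivAt).sub
      (hf w hw.1).hasFDerivAt).hasFDerivWithinAt
  have := (hs.inter (hs.translate_preimage_left c)).norm_image_sub_le_of_norm_hasFDerivWithin_le'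
    hk (fun w hw => hderiv_increment w hw.1 hw.2) ⟨ha, hac⟩ ⟨had, by simpa [add_right_comm] using hacd⟩
  rw [add_sub_cancel_left, add_right_comm] at this
  simpa only [sub_sub, mul_assoc] using this

end SecondDifference

section MixedHessian

variable {𝕜 : Type*} [NontriviallyNormedField 𝕜] {E F G : Type*} [NormedAddCommGroup E]
  [NormedSpace 𝕜 E] [NormedAddCommGroup F] [NormedSpace 𝕜 F] [NormedAddCommGroup G]
  [NormedSpace 𝕜 G]

variable (𝕜) in
/-- The block `∂ₓ∂_z` of the Hessian of `(x, z) ↦ ψ x z` at `p`. -/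
noncomputable def mixedHessian (ψ : E → F → G) (p : E × F) : E →L[𝕜] F →L[𝕜] G :=
  (fderiv 𝕜 (fderiv 𝕜 fun q : E × F => ψ q.1 q.2) p).bilinearComp
    (ContinuousLinearMap.inl 𝕜 E F) (ContinuousLinearMap.inr 𝕜 E F)

theorem fderiv_fderiv_apply_eq_mixedHessian {ψ : E → F → G} {a : E} {b : F}
    (hψ : ∀ᶠ x in 𝓝 a, DifferentiableAt 𝕜 (fun q : E × F => ψ q.1 q.2) (x, b))
    (hψ' : DifferentiableAt 𝕜 (fderiv 𝕜 fun q : E × F => ψ q.1 q.2) (a, b)) (v : F) (w : E) :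
    fderiv 𝕜 (fun x => fderiv 𝕜 (fun z => ψ x z) b v) a w
      = mixedHessian 𝕜 ψ (a, b) w v := by
  have hpartial : (fun x => fderiv 𝕜 (fun z => ψ x z) b v)
      =ᶠ[𝓝 a] fun x => fderiv 𝕜 (fun q : E × F => ψ q.1 q.2) (x, b) (0, v) := by
    filter_upwards [hψ] with x hx
    have : HasFDerivAt (fun z => ψ x z) _ b :=
      hx.hasFDerivAt.comp b (hasFDerivAt_prodMk_right x b)
    rw [this.fderiv]
    rfl
  have hcomp : HasFDerivAt (fun x => fderiv 𝕜 (fun q : E × F => ψ q.1 q.2) (x, b)) _ a :=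
    hψ'.hasFDerivAt.comp a (hasFDerivAt_prodMk_left a b)
  rw [hpartial.fderiv_eq, (hcomp.clm_apply (hasFDerivAt_const ((0 : E), v) a)).fderiv]
  simp [mixedHessian]

end MixedHessian

theorem ContinuousLinearMap.apply_apply_eq_dotProduct_mulVec {𝕜 ι ι' : Type*}
    [NontriviallyNormedField 𝕜] [Fintype ι] [Fintype ι'] [DecidableEq ι] [DecidableEq ι']
    (B : (ι → 𝕜) →L[𝕜] (ι' → 𝕜) →L[𝕜] 𝕜) (u : ι → 𝕜) (v : ι' → 𝕜) :
    B u v = u ⬝ᵥ (Matrix.of (fun i j => B (Pi.single i 1) (Pi.single j 1)) *ᵥ v) := by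
  rw [← Matrix.toLinearMap₂'_apply']
  exact (LinearMap.congr_fun₂ (Matrix.toLinearMap₂'_toMatrix'
    ((ContinuousLinearMap.coeLM 𝕜).comp (B : (ι → 𝕜) →ₗ[𝕜] (ι' → 𝕜) →L[𝕜] 𝕜))) u v).symm

theorem exists_pos_mul_sq_norm_le_of_homogeneous {E : Type*} [NormedAddCommGroup E]
    [NormedSpace ℝ E] [FiniteDimensional ℝ E] {R : E → ℝ} (hR : Continuous R)
    (hhom : ∀ (t : ℝ) (u : E), R (t • u) = t ^ 2 * R u) (hpos : ∀ u ≠ 0, 0 < R u) :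
    ∃ c > 0, ∀ u, c * ‖u‖ ^ 2 ≤ R u := by
  obtain ⟨c, hc, hcR⟩ := (isCompact_sphere (0 : E) 1).exists_forall_le' hR.continuousOn
    fun u hu => hpos u (ne_zero_of_mem_unit_sphere ⟨u, hu⟩)
  refine ⟨c, hc, fun u => ?_⟩
  rcases eq_or_ne u 0 with rfl | hu
  · simpa using (hhom 0 0).ge
  · have hu' : 0 < ‖u‖ := norm_pos_iff.2 hu
    have hsphere : ‖u‖⁻¹ • u ∈ sphere (0 : E) 1 := by
      simp [norm_smul, hu'.ne']
    calc c * ‖u‖ ^ 2 ≤ ‖u‖ ^ 2 * R (‖u‖⁻¹ • u) := by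
          rw [mul_comm]; exact mul_le_mul_of_nonneg_left (hcR _ hsphere) (by positivity)
      _ = R u := by rw [← hhom, smul_smul, mul_inv_cancel₀ hu'.ne', one_smul]

theorem AnalyticOnNhd.conj_apply_conj_of_im_eq_zero {F : ℂ → ℂ} {R : ℝ}
    (hF : AnalyticOnNhd ℂ F (ball 0 R)) (hreal : ∀ t : ℝ, |t| < R → (F t).im = 0) {z : ℂ}
    (hz : z ∈ ball 0 R) : conj (F (conj z)) = F z := by
  have hG : AnalyticOnNhd ℂ (conj ∘ F ∘ conj) (ball 0 R) := by
    refine DifferentiableOn.analyticOnNhd (fun w hw => ?_) isOpen_ball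
    have hw' : conj w ∈ ball 0 R := by simpa using hw
    simpa using ((hF _ hw').differentiableAt.conj_conj).differentiableWithinAt
  have hR : 0 < R := pos_of_mem_ball hz
  have hofReal : Tendsto ((↑) : ℝ → ℂ) (𝓝[≠] 0) (𝓝[≠] 0) :=
    tendsto_nhdsWithin_iff.2
      ⟨(Complex.continuous_ofReal.tendsto' 0 0 Complex.ofReal_zero).mono_left nhdsWithin_le_nhds,
        eventually_nhdsWithin_of_forall fun t ht => by simpa using ht⟩
  have hfreq : ∃ᶠ w in 𝓝[≠] 0, F w = (conj ∘ F ∘ conj) w := by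
    refine hofReal.frequently (Eventually.frequently ?_)
    filter_upwards [nhdsWithin_le_nhds (Ioo_mem_nhds (neg_lt_zero.2 hR) hR)] with t ht
    simp [Complex.conj_eq_iff_im.2 (hreal t (abs_lt.2 ht))]
  exact (hF.eqOn_of_preconnected_of_frequently_eq hG (convex_ball 0 R).isPreconnected
    (mem_ball_self hR) hfreq hz).symm

section Diastasis

variable {n : ℕ}

theorem conjVec_eq_star (x : Fin n → ℂ) : conjVec x = star x := rfl

theorem sq_norm_le_sum_sq_norm (u : Fin n → ℂ) : ‖u‖ ^ 2 ≤ ∑ i, ‖u i‖ ^ 2 := by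
  refine (Real.le_sqrt (norm_nonneg u) (by positivity)).1 <|
    (pi_norm_le_iff_of_nonneg (Real.sqrt_nonneg _)).2 fun i => Real.le_sqrt_of_sq_le ?_
  exact Finset.single_le_sum (f := fun j => ‖u j‖ ^ 2) (fun j _ => sq_nonneg _)
    (Finset.mem_univ i)

theorem sum_sq_norm_le_mul_sq_norm (u : Fin n → ℂ) : ∑ i, ‖u i‖ ^ 2 ≤ n * ‖u‖ ^ 2 := by
  calc ∑ i, ‖u i‖ ^ 2 ≤ ∑ _i : Fin n, ‖u‖ ^ 2 := by
        gcongr with i; exact norm_le_pi_norm u i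
    _ = n * ‖u‖ ^ 2 := by simp

theorem re_apply_conjVec_pos_of_posDef {B : (Fin n → ℂ) →L[ℂ] (Fin n → ℂ) →L[ℂ] ℂ}
    (hB : (Matrix.of fun i j => B (Pi.single i 1) (Pi.single j 1)).PosDef) {u : Fin n → ℂ}
    (hu : u ≠ 0) : 0 < (B u (conjVec u)).re := by
  have := hB.dotProduct_mulVec_pos (star_ne_zero.2 hu)
  rw [star_star, ← ContinuousLinearMap.apply_apply_eq_dotProduct_mulVec] at this
  exact (Complex.lt_def.1 this).1

variable {ψ : (Fin n → ℂ) → (Fin n → ℂ) → ℂ} {W : Set (Fin n → ℂ)}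

theorem diastasis_eq_re_sub {x y : Fin n → ℂ} (h : ψ y (conjVec x) = conj (ψ x (conjVec y))) :
    diastasis ψ x y
      = (ψ x (conjVec x) - ψ y (conjVec x) - (ψ x (conjVec y) - ψ y (conjVec y))).re := by
  simp only [diastasis, potential, h, Complex.sub_re, Complex.conj_re]
  ring

open Complex in
theorem exists_apply_conjVec_eq_conj (hW : IsOpen W) (h0W : (0 : Fin n → ℂ) ∈ W)
    (hψ : AnalyticOnNhd ℂ (fun p : (Fin n → ℂ) × (Fin n → ℂ) => ψ p.1 p.2) (W ×ˢ W))
    (hreal : ∀ x ∈ W, (ψ x (conjVec x)).im = 0) :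
    ∃ r > 0, ∀ x y : Fin n → ℂ, ‖x‖ < r → ‖y‖ < r →
      ψ y (conjVec x) = conj (ψ x (conjVec y)) := by
  obtain ⟨ρ, hρ, hρW⟩ := Metric.isOpen_iff.1 hW 0 h0W
  refine ⟨ρ / 3, by positivity, fun x y hx hy => ?_⟩
  -- `w ↦ (c w, L w)` is a complex line through `(y, conj x)` (at `w = I`) and `(x, conj y)`
  -- (at `w = -I`) whose real points lie on the diagonal `{(z, conj z)}`
  set c : ℂ → Fin n → ℂ := fun w => ((1 + I * w) / 2) • x + ((1 - I * w) / 2) • y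
  set L : ℂ → Fin n → ℂ := fun w => ((1 - I * w) / 2) • star x + ((1 + I * w) / 2) • star y
  have hL : ∀ w, L w = star (c (conj w)) := fun w => by
    simp [c, L, star_add, star_smul, sub_eq_add_neg]
  have hc : ∀ w : ℂ, ‖w‖ < 2 → ‖c w‖ < ρ := fun w hw => by
    have h1 : ‖(1 + I * w) / 2‖ ≤ (1 + ‖w‖) / 2 := by
      rw [norm_div, RCLike.norm_ofNat]; gcongr; simpa using norm_add_le 1 (I * w)
    have h2 : ‖(1 - I * w) / 2‖ ≤ (1 + ‖w‖) / 2 := by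
      rw [norm_div, RCLike.norm_ofNat]; gcongr; simpa using norm_sub_le 1 (I * w)
    calc ‖c w‖ ≤ ‖(1 + I * w) / 2‖ * ‖x‖ + ‖(1 - I * w) / 2‖ * ‖y‖ :=
          (norm_add_le _ _).trans_eq (by rw [norm_smul, norm_smul])
      _ ≤ (1 + ‖w‖) / 2 * ‖x‖ + (1 + ‖w‖) / 2 * ‖y‖ := by gcongr
      _ < ρ := by nlinarith [norm_nonneg x, norm_nonneg y, norm_nonneg w]
  have hmem : ∀ w ∈ ball (0 : ℂ) 2, (c w, L w) ∈ W ×ˢ W := fun w hw => by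
    rw [mem_ball_zero_iff] at hw
    refine ⟨hρW (mem_ball_zero_iff.2 (hc w hw)), hρW (mem_ball_zero_iff.2 ?_)⟩
    rw [hL, norm_star]
    exact hc _ (by simpa using hw)
  have hF : AnalyticOnNhd ℂ (fun w => ψ (c w) (L w)) (ball 0 2) := fun w hw =>
    (hψ _ (hmem w hw)).comp_of_eq (f := fun w => (c w, L w)) (by fun_prop) rfl
  have hFreal : ∀ t : ℝ, |t| < 2 → (ψ (c t) (L t)).im = 0 := fun t ht => by
    rw [hL, conj_ofReal]
    exact hreal _ (hmem t (by simpa using ht)).1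
  have := hF.conj_apply_conj_of_im_eq_zero hFreal (z := I) (by simp)
  have hcI : c I = y := by simp [c, I_mul_I]
  have hcI' : c (-I) = x := by simp [c, I_mul_I]
  simp only [hL, conj_I, conj_neg_I, hcI, hcI'] at this
  exact this.symm

theorem exists_abs_diastasis_sub_le (hW : IsOpen W) (h0W : (0 : Fin n → ℂ) ∈ W)
    (hψ : AnalyticOnNhd ℂ (fun p : (Fin n → ℂ) × (Fin n → ℂ) => ψ p.1 p.2) (W ×ˢ W))
    (hreal : ∀ x ∈ W, (ψ x (conjVec x)).im = 0) {ε : ℝ} (hε : 0 < ε) :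
    ∃ r > 0, ∀ x y : Fin n → ℂ, ‖x‖ < r → ‖y‖ < r →
      |diastasis ψ x y - (mixedHessian ℂ ψ 0 (x - y) (conjVec (x - y))).re|
        ≤ ε * ‖x - y‖ ^ 2 := by
  set f := fun p : (Fin n → ℂ) × (Fin n → ℂ) => ψ p.1 p.2
  have h00 : (0 : (Fin n → ℂ) × (Fin n → ℂ)) ∈ W ×ˢ W := ⟨h0W, h0W⟩
  have hnear : ∀ᶠ p in 𝓝 (0 : (Fin n → ℂ) × (Fin n → ℂ)),
      p ∈ W ×ˢ W ∧ ‖fderiv ℂ (fderiv ℂ f) p - fderiv ℂ (fderiv ℂ f) 0‖ ≤ ε := by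
    refine ((hW.prod hW).eventually_mem h00).and ?_
    simpa [dist_eq_norm] using
      (hψ.fderiv.fderiv 0 h00).continuousAt.eventually (closedBall_mem_nhds _ hε)
  obtain ⟨ρ, hρ, hρnear⟩ := Metric.eventually_nhds_iff_ball.1 hnear
  obtain ⟨r, hr, hrefl⟩ := exists_apply_conjVec_eq_conj hW h0W hψ hreal
  refine ⟨min ρ r, by positivity, fun x y hx hy => ?_⟩
  have hxρ : ‖x‖ < ρ := hx.trans_le (min_le_left _ _)
  have hyρ : ‖y‖ < ρ := hy.trans_le (min_le_left _ _)
  have hsecond := (convex_ball (0 : (Fin n → ℂ) × (Fin n → ℂ)) ρ).norm_second_difference_sub_le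
    (f := f) (fun w hw => (hψ w (hρnear w hw).1).differentiableAt)
    (fun w hw => (hψ.fderiv w (hρnear w hw).1).differentiableAt) (fun w hw => (hρnear w hw).2)
    (a := (y, star y)) (c := (x - y, 0)) (d := (0, star (x - y)))
    (by simp [Prod.norm_def, hyρ]) (by simp [Prod.norm_def, hxρ, hyρ])
    (by simp [Prod.norm_def, hxρ, hyρ]) (by simp [Prod.norm_def, hxρ])
  have hnorm : ‖((x - y, 0) : (Fin n → ℂ) × (Fin n → ℂ))‖ * ‖((0 : Fin n → ℂ), star (x - y))‖
      = ‖x - y‖ ^ 2 := by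
    rw [Prod.norm_mk, Prod.norm_mk, norm_zero, norm_star, max_eq_left (norm_nonneg _),
      max_eq_right (norm_nonneg _), sq]
  have hxx : (y, star y) + (x - y, 0) + (0, star (x - y)) = (x, star x) := by ext <;> simp
  have hyx : (y, star y) + (0, star (x - y)) = (y, star x) := by ext <;> simp
  have hxy : (y, star y) + (x - y, 0) = (x, star y) := by ext <;> simp
  rw [mul_assoc, hnorm, hxx, hyx, hxy] at hsecond
  rw [diastasis_eq_re_sub (hrefl x y (hx.trans_le (min_le_right _ _))
    (hy.trans_le (min_le_right _ _))), ← Complex.sub_re]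
  exact (Complex.abs_re_le_norm _).trans hsecond

theorem exists_diastasis_bounds (hW : IsOpen W) (h0W : (0 : Fin n → ℂ) ∈ W)
    (hψ : AnalyticOnNhd ℂ (fun p : (Fin n → ℂ) × (Fin n → ℂ) => ψ p.1 p.2) (W ×ˢ W))
    (hreal : ∀ x ∈ W, (ψ x (conjVec x)).im = 0)
    (hpos : (Matrix.of fun i j : Fin n =>
        fderiv ℂ (fun x : Fin n → ℂ =>
          fderiv ℂ (fun z : Fin n → ℂ => ψ x z) 0 (Pi.single j 1)) 0
          (Pi.single i 1)).PosDef) :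
    ∃ a > 0, ∃ b > 0, ∃ r > 0, ∀ x y : Fin n → ℂ, ‖x‖ < r → ‖y‖ < r →
      a * ‖x - y‖ ^ 2 ≤ diastasis ψ x y ∧ diastasis ψ x y ≤ b * ‖x - y‖ ^ 2 := by
  set H : (Fin n → ℂ) →L[ℂ] (Fin n → ℂ) →L[ℂ] ℂ := mixedHessian ℂ ψ 0
  have hHpos : (Matrix.of fun i j => H (Pi.single i 1) (Pi.single j 1)).PosDef := by
    have hdiff : ∀ᶠ x in 𝓝 0, DifferentiableAt ℂ (fun p : (Fin n → ℂ) × (Fin n → ℂ) =>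
        ψ p.1 p.2) (x, 0) := by
      filter_upwards [hW.mem_nhds h0W] with x hx
      exact (hψ _ ⟨hx, h0W⟩).differentiableAt
    simpa only [fderiv_fderiv_apply_eq_mixedHessian hdiff
      (hψ.fderiv _ ⟨h0W, h0W⟩).differentiableAt, Prod.mk_zero_zero] using hpos
  obtain ⟨c, hc, hcR⟩ := exists_pos_mul_sq_norm_le_of_homogeneous
    (R := fun u => (H u (conjVec u)).re) (by simp only [conjVec_eq_star]; fun_prop)
    (fun t u => by simp [conjVec_eq_star, star_smul, sq, mul_assoc])
    fun u hu => re_apply_conjVec_pos_of_posDef hHpos hu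
  obtain ⟨r, hr, hD⟩ := exists_abs_diastasis_sub_le hW h0W hψ hreal (half_pos hc)
  refine ⟨c / 2, half_pos hc, ‖H‖ + c / 2, by positivity, r, hr, fun x y hx hy => ?_⟩
  have hupper : (H (x - y) (conjVec (x - y))).re ≤ ‖H‖ * ‖x - y‖ ^ 2 := by
    refine (Complex.re_le_norm _).trans ((H.le_opNorm₂ _ _).trans_eq ?_)
    rw [conjVec_eq_star, norm_star, mul_assoc, sq]
  have := abs_le.1 (hD x y hx hy)
  constructor <;> nlinarith [hcR (x - y)]

end Diastasis

theorem stmt_15_general (n : ℕ) (ψ : (Fin n → ℂ) → (Fin n → ℂ) → ℂ)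
    (W : Set (Fin n → ℂ)) (hW : IsOpen W) (h0W : (0 : Fin n → ℂ) ∈ W)
    (hψ : AnalyticOnNhd ℂ (fun p : (Fin n → ℂ) × (Fin n → ℂ) => ψ p.1 p.2) (W ×ˢ W))
    (hreal : ∀ x ∈ W, (ψ x (conjVec x)).im = 0)
    (hpos : (Matrix.of fun i j : Fin n =>
        fderiv ℂ (fun x : Fin n → ℂ =>
          fderiv ℂ (fun z : Fin n → ℂ => ψ x z) 0 (Pi.single j 1)) 0
          (Pi.single i 1)).PosDef) :
    ∃ δ : ℝ, 0 < δ ∧ ∃ r : ℝ, 0 < r ∧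
      ∀ x y : Fin n → ℂ,
        (∑ i, ‖x i‖ ^ 2) < r ^ 2 →
        (∑ i, ‖y i‖ ^ 2) < r ^ 2 →
          δ * ∑ i, ‖x i - y i‖ ^ 2 ≤ diastasis ψ x y ∧
          diastasis ψ x y ≤ δ⁻¹ * ∑ i, ‖x i - y i‖ ^ 2 ∧
          2 * (ψ x (conjVec y)).re ≤
            potential ψ x + potential ψ y - δ * ∑ i, ‖x i - y i‖ ^ 2 := by
  obtain ⟨a, ha, b, hb, r, hr, hD⟩ := exists_diastasis_bounds hW h0W hψ hreal hpos
  have hnorm : ∀ x : Fin n → ℂ, ∑ i, ‖x i‖ ^ 2 < r ^ 2 → ‖x‖ < r := fun x hx =>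
    lt_of_pow_lt_pow_left₀ 2 hr.le ((sq_norm_le_sum_sq_norm x).trans_lt hx)
  set δ := min (a / (n + 1)) b⁻¹
  have hδ : 0 < δ := lt_min (by positivity) (inv_pos.2 hb)
  have hδa : δ * (n + 1) ≤ a := (le_div_iff₀ (by positivity)).1 (min_le_left _ _)
  have hbδ : b ≤ δ⁻¹ := (le_inv_comm₀ hδ hb).1 (min_le_right _ _)
  refine ⟨δ, hδ, r, hr, fun x y hx hy => ?_⟩
  obtain ⟨hlow, hup⟩ := hD x y (hnorm x hx) (hnorm y hy)
  have hsum_le := sum_sq_norm_le_mul_sq_norm (x - y)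
  have hsq_le := sq_norm_le_sum_sq_norm (x - y)
  simp only [Pi.sub_apply] at hsum_le hsq_le
  have hlow' : δ * ∑ i, ‖x i - y i‖ ^ 2 ≤ diastasis ψ x y := by nlinarith [sq_nonneg ‖x - y‖]
  refine ⟨hlow', by nlinarith [sq_nonneg ‖x - y‖], ?_⟩
  unfold diastasis at hlow'
  linarith

/-- Two-sided comparison of Calabi's diastasis with the squared Euclidean distance
near the origin, together with the 'good contour' inequality
`2 Re ψ(x, conj y) ≤ φ(x) + φ(y) - δ ‖x - y‖²`. -/
theorem stmt_15 (n : ℕ) (hn : 1 ≤ n) (ψ : (Fin n → ℂ) → (Fin n → ℂ) → ℂ)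
    (W : Set (Fin n → ℂ)) (hW : IsOpen W) (h0W : (0 : Fin n → ℂ) ∈ W)
    (hψ : AnalyticOnNhd ℂ (fun p : (Fin n → ℂ) × (Fin n → ℂ) => ψ p.1 p.2) (W ×ˢ W))
    (hreal : ∀ x ∈ W, (ψ x (conjVec x)).im = 0)
    (hpos : (Matrix.of fun i j : Fin n =>
        fderiv ℂ (fun x : Fin n → ℂ =>
          fderiv ℂ (fun z : Fin n → ℂ => ψ x z) 0 (Pi.single j 1)) 0
          (Pi.single i 1)).PosDef) :
    ∃ δ : ℝ, 0 < δ ∧ ∃ r : ℝ, 0 < r ∧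
      ∀ x y : Fin n → ℂ,
        (∑ i, ‖x i‖ ^ 2) < r ^ 2 →
        (∑ i, ‖y i‖ ^ 2) < r ^ 2 →
          δ * ∑ i, ‖x i - y i‖ ^ 2 ≤ diastasis ψ x y ∧
          diastasis ψ x y ≤ δ⁻¹ * ∑ i, ‖x i - y i‖ ^ 2 ∧
          2 * (ψ x (conjVec y)).re ≤
            potential ψ x + potential ψ y - δ * ∑ i, ‖x i - y i‖ ^ 2 :=
  stmt_15_general n ψ W hW h0W hψ hreal hpos
end
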